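/- arXiv:1608.00024 — 11 statements merged into one kernel-verified Lean document; each statement's English description precedes it below -/
import Mathlib

section
/- Let (a_n) be a sequence of complex numbers, Q(x) = sum_{i=0}^t Q_i x^i a polynomial in C[x] with |α| < 1 a root, and write Q(x) = (x - α) R(x) with R(x) = sum_{i=0}^{t-1} R_i x^i. If the sequence (sum_{i=0}^t Q_i a_{n+i})_{n≥0} is bounded, then the sequence (sum_{i=0}^{t-1} R_i a_{n+i})_{n≥0} is also bounded. -/
open Polynomial Finset

lemma sum_coeff_extend (P : Polynomial ℂ) (m : ℕ) (hm : P.natDegree + 1 ≤ m)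
    (f : ℕ → ℂ) :
    ∑ i ∈ Finset.range (P.natDegree + 1), P.coeff i * f i
      = ∑ i ∈ Finset.range m, P.coeff i * f i := by
  apply Finset.sum_subset
  · exact Finset.range_subset_range.2 hm
  · intro i _ hi
    rw [Finset.mem_range, not_lt] at hi
    rw [P.coeff_eq_zero_of_natDegree_lt (by omega), zero_mul]

theorem bounded_after_dividing_small_root
    (a : ℕ → ℂ) (α : ℂ) (hα : ‖α‖ < 1) (Q R : Polynomial ℂ)
    (hQR : Q = (Polynomial.X - Polynomial.C α) * R)
    (hbdd : ∃ M : ℝ, ∀ n : ℕ,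
      ‖∑ i ∈ Finset.range (Q.natDegree + 1), Q.coeff i * a (n + i)‖ ≤ M) :
    ∃ M' : ℝ, ∀ n : ℕ,
      ‖∑ i ∈ Finset.range (R.natDegree + 1), R.coeff i * a (n + i)‖ ≤ M' := by
  obtain ⟨M, hM⟩ := hbdd
  set b : ℕ → ℂ := fun n => ∑ i ∈ Finset.range (Q.natDegree + 1), Q.coeff i * a (n + i) with hb
  set c : ℕ → ℂ := fun n => ∑ i ∈ Finset.range (R.natDegree + 1), R.coeff i * a (n + i) with hc
  set N := R.natDegree + 2 with hN
  have hQdeg : Q.natDegree + 1 ≤ N := by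
    have h1 := Polynomial.natDegree_mul_le (p := Polynomial.X - Polynomial.C α) (q := R)
    rw [Polynomial.natDegree_X_sub_C] at h1
    rw [hQR]
    omega
  have key : ∀ n, c (n + 1) = α * c n + b n := by
    intro n
    have hbn : b n = ∑ i ∈ Finset.range N, Q.coeff i * a (n + i) := by
      rw [hb]
      exact sum_coeff_extend Q N hQdeg (fun i => a (n + i))
    have hcn : c n = ∑ i ∈ Finset.range N, R.coeff i * a (n + i) := by
      rw [hc]
      exact sum_coeff_extend R N (by omega) (fun i => a (n + i))
    have hQc : ∀ i, Q.coeff i = (Polynomial.X * R).coeff i - α * R.coeff i := by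
      intro i
      rw [hQR, sub_mul, Polynomial.coeff_sub, Polynomial.coeff_C_mul]
    rw [hbn]
    have : ∑ i ∈ Finset.range N, Q.coeff i * a (n + i)
        = (∑ i ∈ Finset.range N, (Polynomial.X * R).coeff i * a (n + i))
          - α * ∑ i ∈ Finset.range N, R.coeff i * a (n + i) := by
      rw [Finset.mul_sum, ← Finset.sum_sub_distrib]
      apply Finset.sum_congr rfl
      intro i _
      rw [hQc i]
      ring
    rw [this, ← hcn]
    have hXR : ∑ i ∈ Finset.range N, (Polynomial.X * R).coeff i * a (n + i) = c (n + 1) := by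
      rw [hN, Finset.sum_range_succ']
      have h0 : (Polynomial.X * R).coeff 0 * a (n + 0) = 0 := by
        rw [Polynomial.mul_coeff_zero, Polynomial.coeff_X_zero, zero_mul, zero_mul]
      rw [h0, add_zero, hc]
      apply Finset.sum_congr rfl
      intro j _
      have hidx : n + (j + 1) = n + 1 + j := by omega
      rw [Polynomial.coeff_X_mul, hidx]
    rw [hXR]
    ring
  have hM0 : (0 : ℝ) ≤ M := le_trans (norm_nonneg _) (hM 0)
  have hα1 : 0 < 1 - ‖α‖ := by linarith
  refine ⟨max ‖c 0‖ (M / (1 - ‖α‖)), ?_⟩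
  set B := max ‖c 0‖ (M / (1 - ‖α‖)) with hB
  have hMB : M ≤ B * (1 - ‖α‖) := (div_le_iff₀ hα1).mp (le_max_right _ _)
  intro n
  induction n with
  | zero => exact le_max_left _ _
  | succ n ih =>
    calc ‖c (n + 1)‖ = ‖α * c n + b n‖ := by rw [key n]
    _ ≤ ‖α * c n‖ + ‖b n‖ := norm_add_le _ _
    _ = ‖α‖ * ‖c n‖ + ‖b n‖ := by rw [norm_mul]
    _ ≤ ‖α‖ * B + M := by
        have := hM n
        have hα0 : (0:ℝ) ≤ ‖α‖ := norm_nonneg _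
        nlinarith
    _ ≤ B := by nlinarith
end

section
/- Let (a_n) be a sequence of complex numbers with a_n = O(n), Q(x) = sum_{i=0}^t Q_i x^i a polynomial in C[x] with a root α of modulus |α| > 1, and write Q(x) = (x - α) R(x) with R(x) = sum_{i=0}^{t-1} R_i x^i. If the sequence (sum_{i=0}^t Q_i a_{n+i})_{n≥0} is bounded, then the sequence (sum_{i=0}^{t-1} R_i a_{n+i})_{n≥0} is also bounded. -/
open Polynomial Finset Filter

theorem bounded_after_dividing_large_root
    (a : ℕ → ℂ) (C : ℝ) (hC : 0 < C) (ha : ∀ n : ℕ, ‖a n‖ ≤ C * (n + 1))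
    (α : ℂ) (hα : 1 < ‖α‖) (Q R : Polynomial ℂ)
    (hQR : Q = (Polynomial.X - Polynomial.C α) * R)
    (hbdd : ∃ M : ℝ, ∀ n : ℕ,
      ‖∑ i ∈ Finset.range (Q.natDegree + 1), Q.coeff i * a (n + i)‖ ≤ M) :
    ∃ M' : ℝ, ∀ n : ℕ,
      ‖∑ i ∈ Finset.range (R.natDegree + 1), R.coeff i * a (n + i)‖ ≤ M' := by
  obtain ⟨M, hM⟩ := hbdd
  by_cases hR : R = 0
  · exact ⟨0, fun n => by simp [hR]⟩
  have hM0 : 0 ≤ M := le_trans (norm_nonneg _) (hM 0)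
  set t := R.natDegree with ht
  set r : ℕ → ℂ := fun n => ∑ i ∈ Finset.range (t + 1), R.coeff i * a (n + i) with hrdef
  set x := ‖α‖ with hxdef
  have hx0 : 0 < x := lt_trans one_pos hα
  have hQdeg : Q.natDegree = t + 1 := by
    rw [hQR, natDegree_mul (X_sub_C_ne_zero α) hR, natDegree_X_sub_C]
    ring
  -- key recurrence
  have hkey : ∀ n, (∑ i ∈ Finset.range (Q.natDegree + 1), Q.coeff i * a (n + i))
      = r (n + 1) - α * r n := by
    intro n
    have hc : ∀ i, Q.coeff i = (X * R).coeff i - α * R.coeff i := by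
      intro i
      rw [hQR, sub_mul, coeff_sub, coeff_C_mul]
    rw [hQdeg]
    calc ∑ i ∈ Finset.range (t + 1 + 1), Q.coeff i * a (n + i)
        = ∑ i ∈ Finset.range (t + 1 + 1), ((X * R).coeff i * a (n + i)
            - α * (R.coeff i * a (n + i))) := by
          refine Finset.sum_congr rfl fun i _ => ?_
          rw [hc i]; ring
      _ = (∑ i ∈ Finset.range (t + 1 + 1), (X * R).coeff i * a (n + i))
            - α * ∑ i ∈ Finset.range (t + 1 + 1), R.coeff i * a (n + i) := by
          rw [Finset.sum_sub_distrib, Finset.mul_sum]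
      _ = r (n + 1) - α * r n := by
          congr 1
          · rw [Finset.sum_range_succ']
            have h0 : (X * R).coeff 0 = 0 := by simp [mul_coeff_zero]
            rw [h0, zero_mul, add_zero]
            refine Finset.sum_congr rfl fun i _ => ?_
            rw [coeff_X_mul]
            congr 2
            omega
          · congr 1
            rw [Finset.sum_range_succ,
              coeff_eq_zero_of_natDegree_lt (by omega : R.natDegree < t + 1),
              zero_mul, add_zero]
  -- one-step estimate
  have hstep : ∀ j, ‖r j‖ ≤ (‖r (j + 1)‖ + M) / x := by
    intro j
    rw [le_div_iff₀ hx0]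
    have : ‖α * r j‖ = ‖r (j + 1) - (r (j + 1) - α * r j)‖ := by congr 1; ring
    calc ‖r j‖ * x = ‖α * r j‖ := by rw [norm_mul]; ring
      _ ≤ ‖r (j + 1)‖ + ‖r (j + 1) - α * r j‖ := by
          rw [this]; exact norm_sub_le _ _
      _ ≤ ‖r (j + 1)‖ + M := by
          have := hM j
          rw [hkey j] at this
          linarith
  -- iterated estimate
  have hiter : ∀ m n, ‖r n‖ ≤ ‖r (n + m)‖ / x ^ m
      + M * ∑ k ∈ Finset.range m, (x⁻¹) ^ (k + 1) := by
    intro m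
    induction m with
    | zero => intro n; simp
    | succ m ih =>
        intro n
        have h1 := ih n
        have h2 : ‖r (n + m)‖ / x ^ m ≤ ((‖r (n + m + 1)‖ + M) / x) / x ^ m := by
          gcongr
          exact hstep (n + m)
        have h3 : ((‖r (n + m + 1)‖ + M) / x) / x ^ m
            = ‖r (n + (m + 1))‖ / x ^ (m + 1) + M * (x⁻¹) ^ (m + 1) := by
          rw [show n + (m + 1) = n + m + 1 by omega, div_div, ← pow_succ', add_div,
            div_eq_mul_inv M, ← inv_pow]
        rw [Finset.sum_range_succ, mul_add]
        calc ‖r n‖ ≤ ‖r (n + m)‖ / x ^ m + M * ∑ k ∈ Finset.range m, (x⁻¹) ^ (k + 1) := h1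
          _ ≤ ((‖r (n + m + 1)‖ + M) / x) / x ^ m
              + M * ∑ k ∈ Finset.range m, (x⁻¹) ^ (k + 1) := by linarith
          _ = ‖r (n + (m + 1))‖ / x ^ (m + 1)
              + (M * ∑ k ∈ Finset.range m, (x⁻¹) ^ (k + 1) + M * x⁻¹ ^ (m + 1)) := by
            rw [h3]; ring
  -- geometric sum bound
  have hy0 : (0 : ℝ) ≤ x⁻¹ := le_of_lt (inv_pos.mpr hx0)
  have hy1 : x⁻¹ < 1 := inv_lt_one_of_one_lt₀ hα
  have hgeom : ∀ m, ∑ k ∈ Finset.range m, (x⁻¹) ^ (k + 1) ≤ (1 - x⁻¹)⁻¹ := by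
    intro m
    calc ∑ k ∈ Finset.range m, (x⁻¹) ^ (k + 1)
        ≤ ∑ k ∈ Finset.range m, (x⁻¹) ^ k := by
          refine Finset.sum_le_sum fun k _ => ?_
          exact pow_le_pow_of_le_one hy0 (le_of_lt hy1) (by omega)
      _ ≤ (1 - x⁻¹)⁻¹ := by
          have hs := hasSum_geometric_of_lt_one hy0 hy1
          have := Summable.sum_le_tsum (Finset.range m) (fun k _ => pow_nonneg hy0 k) hs.summable
          rwa [hs.tsum_eq] at this
  -- linear growth of r
  set K := (∑ i ∈ Finset.range (t + 1), ‖R.coeff i‖) * C with hKdef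
  have hK0 : 0 ≤ K := mul_nonneg (Finset.sum_nonneg fun i _ => norm_nonneg _) (le_of_lt hC)
  have hrg : ∀ j : ℕ, ‖r j‖ ≤ K * (j + t + 1) := by
    intro j
    calc ‖r j‖ ≤ ∑ i ∈ Finset.range (t + 1), ‖R.coeff i * a (j + i)‖ :=
          norm_sum_le _ _
      _ ≤ ∑ i ∈ Finset.range (t + 1), ‖R.coeff i‖ * (C * (j + t + 1)) := by
          refine Finset.sum_le_sum fun i hi => ?_
          rw [norm_mul]
          have hi' : (i : ℝ) ≤ t := by
            have := Finset.mem_range.mp hi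
            exact_mod_cast Nat.lt_succ_iff.mp this
          have hai : ‖a (j + i)‖ ≤ C * (j + t + 1) := by
            refine le_trans (ha (j + i)) ?_
            have : ((j + i : ℕ) : ℝ) + 1 ≤ (j : ℝ) + t + 1 := by
              push_cast; linarith
            nlinarith [norm_nonneg (a (j + i))]
          exact mul_le_mul_of_nonneg_left hai (norm_nonneg _)
      _ = K * (j + t + 1) := by rw [← Finset.sum_mul, hKdef]; ring
  -- conclude
  refine ⟨M * (1 - x⁻¹)⁻¹, fun n => ?_⟩
  have hbound : ∀ m : ℕ, ‖r n‖ ≤ (K * (n + t + 1) + K * m) * (x⁻¹) ^ m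
      + M * (1 - x⁻¹)⁻¹ := by
    intro m
    have h1 := hiter m n
    have h2 : ‖r (n + m)‖ / x ^ m ≤ (K * (n + t + 1) + K * m) * (x⁻¹) ^ m := by
      rw [div_eq_mul_inv, ← inv_pow]
      refine mul_le_mul_of_nonneg_right ?_ (pow_nonneg hy0 m)
      calc ‖r (n + m)‖ ≤ K * ((n + m : ℕ) + t + 1) := hrg (n + m)
        _ = K * (n + t + 1) + K * m := by push_cast; ring
    have h3 : M * ∑ k ∈ Finset.range m, (x⁻¹) ^ (k + 1) ≤ M * (1 - x⁻¹)⁻¹ :=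
      mul_le_mul_of_nonneg_left (hgeom m) hM0
    linarith
  have htend : Tendsto (fun m : ℕ => (K * (n + t + 1) + K * m) * (x⁻¹) ^ m
      + M * (1 - x⁻¹)⁻¹) atTop (nhds (0 + M * (1 - x⁻¹)⁻¹)) := by
    refine Tendsto.add ?_ tendsto_const_nhds
    have ht1 : Tendsto (fun m : ℕ => K * (n + t + 1) * (x⁻¹) ^ m) atTop (nhds 0) := by
      simpa using (tendsto_pow_atTop_nhds_zero_of_lt_one hy0 hy1).const_mul (K * (n + t + 1))
    have ht2 : Tendsto (fun m : ℕ => K * (m * (x⁻¹) ^ m)) atTop (nhds 0) := by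
      simpa using (tendsto_self_mul_const_pow_of_lt_one hy0 hy1).const_mul K
    have := ht1.add ht2
    rw [add_zero] at this
    refine this.congr fun m => ?_
    ring
  rw [zero_add] at htend
  exact ge_of_tendsto' htend hbound
end

section
/- Let r ≥ 2, let η_1, ..., η_r be pairwise distinct complex numbers on the unit circle, and let γ_1, ..., γ_r be nonzero complex numbers. Then there exists a constant d_1 > 0 such that |γ_1 η_1^n + ... + γ_r η_r^n| > d_1 holds for infinitely many positive integers n. -/
open Finset

theorem exp_sum_unit_circle_lower_bound
    (r : ℕ) (hr : 2 ≤ r) (η γ : Fin r → ℂ)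
    (hinj : Function.Injective η)
    (hmod : ∀ i, ‖η i‖ = 1)
    (hγ : ∀ i, γ i ≠ 0) :
    ∃ d₁ : ℝ, 0 < d₁ ∧
      {n : ℕ | 0 < n ∧ d₁ < ‖∑ i, γ i * η i ^ n‖}.Infinite := by
  have hr0 : 0 < r := by omega
  set i₀ : Fin r := ⟨0, hr0⟩ with hi₀
  set f : Fin r → ℂ := fun i => if i = i₀ then 1 else 0 with hf
  set p : Polynomial ℂ := Lagrange.interpolate Finset.univ η f with hp
  have heval : ∀ i : Fin r, p.eval (η i) = f i := fun i =>
    Lagrange.eval_interpolate_at_node f hinj.injOn (Finset.mem_univ i)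
  set m : ℕ := p.natDegree + 1 with hm
  set A : ℝ := ∑ j ∈ Finset.range m, ‖p.coeff j‖ with hA
  have hAnn : 0 ≤ A := Finset.sum_nonneg fun _ _ => norm_nonneg _
  have hγ0 : 0 < ‖γ i₀‖ := norm_pos_iff.mpr (hγ i₀)
  set d₁ : ℝ := ‖γ i₀‖ / (A + 1) with hd₁
  have hd : 0 < d₁ := div_pos hγ0 (by linarith)
  refine ⟨d₁, hd, ?_⟩
  have key : ∀ n : ℕ,
      ∑ j ∈ Finset.range m, p.coeff j * (∑ i, γ i * η i ^ (n + j))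
        = γ i₀ * η i₀ ^ n := by
    intro n
    simp_rw [Finset.mul_sum, pow_add]
    rw [Finset.sum_comm]
    have hstep : ∀ i : Fin r,
        ∑ j ∈ Finset.range m, p.coeff j * (γ i * (η i ^ n * η i ^ j))
          = γ i * η i ^ n * f i := by
      intro i
      calc ∑ j ∈ Finset.range m, p.coeff j * (γ i * (η i ^ n * η i ^ j))
          = γ i * η i ^ n * ∑ j ∈ Finset.range m, p.coeff j * η i ^ j := by
            rw [Finset.mul_sum]; exact Finset.sum_congr rfl fun j _ => by ring
        _ = γ i * η i ^ n * p.eval (η i) := by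
            rw [Polynomial.eval_eq_sum_range]
        _ = γ i * η i ^ n * f i := by rw [heval]
    rw [Finset.sum_congr rfl fun i _ => hstep i]
    simp [hf]
  apply Set.infinite_of_not_bddAbove
  rintro ⟨N, hN⟩
  have hwin : ∃ j ∈ Finset.range m, d₁ < ‖∑ i, γ i * η i ^ (N + 1 + j)‖ := by
    by_contra h
    push_neg at h
    have h1 : ‖γ i₀‖
        = ‖∑ j ∈ Finset.range m, p.coeff j * (∑ i, γ i * η i ^ (N + 1 + j))‖ := by
      rw [key (N + 1), norm_mul, norm_pow, hmod, one_pow, mul_one]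
    have h2 : ‖∑ j ∈ Finset.range m, p.coeff j * (∑ i, γ i * η i ^ (N + 1 + j))‖
        ≤ A * d₁ := by
      calc ‖∑ j ∈ Finset.range m, p.coeff j * (∑ i, γ i * η i ^ (N + 1 + j))‖
          ≤ ∑ j ∈ Finset.range m, ‖p.coeff j * (∑ i, γ i * η i ^ (N + 1 + j))‖ :=
            norm_sum_le _ _
        _ ≤ ∑ j ∈ Finset.range m, ‖p.coeff j‖ * d₁ := by
            refine Finset.sum_le_sum fun j hj => ?_
            rw [norm_mul]
            exact mul_le_mul_of_nonneg_left (h j hj) (norm_nonneg _)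
        _ = A * d₁ := by rw [hA, Finset.sum_mul]
    have h3 : A * d₁ < (A + 1) * d₁ := by nlinarith
    have h4 : (A + 1) * d₁ = ‖γ i₀‖ := by
      rw [hd₁]; field_simp
    linarith [h1 ▸ h2]
  obtain ⟨j, _, hj2⟩ := hwin
  have hmem : (N + 1 + j) ∈ {n : ℕ | 0 < n ∧ d₁ < ‖∑ i, γ i * η i ^ n‖} :=
    ⟨by omega, hj2⟩
  have := hN hmem
  omega
end

section
/- Let η_1, ..., η_r be pairwise distinct complex numbers on the unit circle such that at least one quotient η_j/η_r (1 ≤ j < r) is not a root of unity, and let γ_1, ..., γ_{r-1} be nonzero complex numbers. Then for every real d_2 > 1 there exists γ_r ∈ C such that |γ_1 η_1^n + ... + γ_{r-1} η_{r-1}^n + γ_r η_r^n| < d_2^{-n} holds for infinitely many positive integers n. -/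
/-!
Dividing by `η_r ^ n`, it suffices to find `L` with `|f n - L| < d₂⁻ⁿ` infinitely often, where
`f n = ∑ γ_j (η_j / η_r) ^ n`; then `γ_r = -L`. In the compact group of tuples of unit complex
numbers every power of an element is a cluster point of the sequence of its powers, so every value
of `f` is a cluster point of `f`. For such a sequence in a complete space, the sets
`⋃ n ≥ N, ball (f n) (ε n)` are open and dense in the closure of its range, so by Baire's theorem
some `L` lies in all of them.
-/

open Filter Finset

theorem exists_frequently_dist_lt_of_forall_mapClusterPt {E : Type*} [PseudoMetricSpace E]
    [CompleteSpace E] {f : ℕ → E} (hf : ∀ m, MapClusterPt (f m) atTop f) {ε : ℕ → ℝ}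
    (hε : ∀ n, 0 < ε n) : ∃ L, ∃ᶠ n in atTop, dist (f n) L < ε n := by
  let S := closure (Set.range f)
  have : CompleteSpace S := isClosed_closure.completeSpace_coe
  let g : ℕ → S := fun n => ⟨f n, subset_closure (Set.mem_range_self n)⟩
  have : Nonempty S := ⟨g 0⟩
  let U : ℕ → Set S := fun N => ⋃ n ≥ N, Metric.ball (g n) (ε n)
  have hU_open : ∀ N, IsOpen (U N) := fun N => isOpen_biUnion fun n _ => Metric.isOpen_ball
  have hU_dense : ∀ N, Dense (U N) := by
    refine fun N => Metric.dense_iff.2 fun x δ hδ => ?_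
    obtain ⟨_, ⟨m, rfl⟩, hxm⟩ := Metric.mem_closure_iff.1 x.2 (δ / 2) (half_pos hδ)
    obtain ⟨n, hnN, hnm⟩ := frequently_atTop.1
      ((hf m).frequently (Metric.ball_mem_nhds _ (half_pos hδ))) N
    refine ⟨g n, ?_, Set.mem_biUnion hnN (Metric.mem_ball_self (hε n))⟩
    change dist (f n) x < δ
    calc dist (f n) x ≤ dist (f n) (f m) + dist (x : E) (f m) := dist_triangle_right _ _ _
      _ < δ / 2 + δ / 2 := add_lt_add hnm hxm
      _ = δ := add_halves δ
  obtain ⟨L, hL⟩ := (dense_iInter_of_isOpen_nat hU_open hU_dense).nonempty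
  refine ⟨L, frequently_atTop.2 fun N => ?_⟩
  obtain ⟨n, hnN, hn⟩ := Set.mem_iUnion₂.1 (Set.mem_iInter.1 hL N)
  exact ⟨n, hnN, dist_comm (f n) L ▸ hn⟩

theorem mapClusterPt_sum_mul_pow {ι : Type*} (s : Finset ι) (γ ζ : ι → ℂ)
    (hζ : ∀ i ∈ s, ‖ζ i‖ = 1) (m : ℕ) :
    MapClusterPt (∑ i ∈ s, γ i * ζ i ^ m) atTop (fun n => ∑ i ∈ s, γ i * ζ i ^ n) := by
  let z : s → Circle := fun i => ⟨ζ i, mem_sphere_zero_iff_norm.2 (hζ i i.2)⟩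
  have hF : Continuous fun x : s → Circle => ∑ i : s, γ i * x i := by fun_prop
  have hFz : ∀ n : ℕ, ∑ i : s, γ i * ((z ^ n) i : ℂ) = ∑ i ∈ s, γ i * ζ i ^ n := fun n =>
    Finset.sum_coe_sort s fun i => γ i * ζ i ^ n
  simpa only [Function.comp_def, hFz, zpow_natCast] using
    (mapClusterPt_self_zpow_atTop_pow z m).continuousAt_comp hF.continuousAt

theorem exp_sum_unit_circle_small_values_general
    (r : ℕ) (hr : 2 ≤ r) (η γ : ℕ → ℂ)
    (hmod : ∀ i < r, ‖η i‖ = 1)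
    (d₂ : ℝ) (hd₂ : 1 < d₂) :
    ∃ γr : ℂ,
      {n : ℕ | 0 < n ∧
        ‖(∑ i ∈ Finset.range (r - 1), γ i * η i ^ n) + γr * η (r - 1) ^ n‖
          < (d₂ ^ n)⁻¹}.Infinite := by
  set w := η (r - 1)
  have hw : ‖w‖ = 1 := hmod _ (by omega)
  have hw0 : w ≠ 0 := norm_ne_zero_iff.1 (hw ▸ one_ne_zero)
  set f : ℕ → ℂ := fun n => ∑ i ∈ range (r - 1), γ i * (η i / w) ^ n
  have hf : ∀ m, MapClusterPt (f m) atTop f := mapClusterPt_sum_mul_pow _ γ _ fun i hi => by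
    rw [norm_div, hw, hmod i (by rw [mem_range] at hi; omega), div_one]
  obtain ⟨L, hL⟩ := exists_frequently_dist_lt_of_forall_mapClusterPt hf
    (ε := fun n => (d₂ ^ n)⁻¹) fun n => inv_pos.2 (pow_pos (by linarith) n)
  have hfactor : ∀ n, (∑ i ∈ range (r - 1), γ i * η i ^ n) + -L * w ^ n = w ^ n * (f n - L) :=
    fun n => by
      have hterm : ∀ i, γ i * η i ^ n = w ^ n * (γ i * (η i / w) ^ n) := fun i => by
        rw [div_pow, mul_left_comm, mul_div_cancel₀ _ (pow_ne_zero n hw0)]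
      simp only [f, hterm, ← mul_sum]
      ring
  refine ⟨-L, Nat.frequently_atTop_iff_infinite.1 <|
    (hL.and_eventually (eventually_gt_atTop 0)).mono fun n ⟨hn, hpos⟩ => ⟨hpos, ?_⟩⟩
  rwa [hfactor, norm_mul, norm_pow, hw, one_pow, one_mul, ← dist_eq_norm]

theorem exp_sum_unit_circle_small_values
    (r : ℕ) (hr : 2 ≤ r) (η γ : ℕ → ℂ)
    (hmod : ∀ i < r, ‖η i‖ = 1)
    (hdist : ∀ i < r, ∀ j < r, i ≠ j → η i ≠ η j)
    (hnru : ∃ j < r - 1, ∀ m : ℕ, 0 < m → (η j / η (r - 1)) ^ m ≠ 1)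
    (hγ : ∀ i < r - 1, γ i ≠ 0)
    (d₂ : ℝ) (hd₂ : 1 < d₂) :
    ∃ γr : ℂ,
      {n : ℕ | 0 < n ∧
        ‖(∑ i ∈ Finset.range (r - 1), γ i * η i ^ n) + γr * η (r - 1) ^ n‖
          < (d₂ ^ n)⁻¹}.Infinite :=
  exp_sum_unit_circle_small_values_general r hr η γ hmod d₂ hd₂
end

section
/- Let η_1, ..., η_r be pairwise distinct complex numbers on the unit circle and γ_1(x), ..., γ_r(x) nonzero polynomials in C[x]. Set g(n) = γ_1(n) η_1^n + ... + γ_r(n) η_r^n. If there exist G > 0 and n_0 such that |g(n)| ≤ G for all n ≥ n_0, then each γ_j(x) is a constant γ_j, and |γ_j| ≤ G for all j. -/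
/-!
Let `d` be the largest degree of the `γ i`. Since `g(n) η_j⁻ⁿ / nᵈ = ∑ᵢ (γᵢ(n) / nᵈ) (ηᵢ / ηⱼ)ⁿ`,
the term `i = j` tends to the coefficient of `xᵈ` in `γ j`, and for `i ≠ j` the factor
`(ηᵢ / ηⱼ)ⁿ` is a unimodular power `≠ 1`, whose Cesàro means vanish; so the Cesàro means of
`g(n) η_j⁻ⁿ / nᵈ` tend to `(γ j).coeff d`. If `d > 0`, boundedness of `g` makes these means tend
to `0`, killing the leading coefficient of a `γ j` of degree `d`. Hence `d = 0`, and the Cesàro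
means of `g(n) η_j⁻ⁿ`, eventually of norm at most `G`, tend to the constant `γ j`.
-/

open Finset Polynomial Filter Topology

noncomputable def cesaroMean {E : Type*} [AddCommGroup E] [Module ℝ E] (u : ℕ → E) (N : ℕ) : E :=
  (N : ℝ)⁻¹ • ∑ n ∈ range N, u n

section Cesaro

variable {E : Type*} [NormedAddCommGroup E] [NormedSpace ℝ E]

theorem Filter.Tendsto.cesaroMean {u : ℕ → E} {l : E} (h : Tendsto u atTop (𝓝 l)) :
    Tendsto (cesaroMean u) atTop (𝓝 l) :=
  h.cesaro_smul

theorem cesaroMean_sum {ι : Type*} (s : Finset ι) (u : ι → ℕ → E) :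
    cesaroMean (fun n => ∑ i ∈ s, u i n) = fun N => ∑ i ∈ s, cesaroMean (u i) N := by
  ext N
  simp only [cesaroMean, smul_sum]
  exact sum_comm

theorem norm_le_of_tendsto_cesaroMean {u : ℕ → E} {l : E} {G : ℝ}
    (hu : ∀ᶠ n in atTop, ‖u n‖ ≤ G) (h : Tendsto (cesaroMean u) atTop (𝓝 l)) : ‖l‖ ≤ G := by
  have hmax : Tendsto (cesaroMean fun n => max ‖u n‖ G) atTop (𝓝 G) :=
    (tendsto_const_nhds.congr' (hu.mono fun n hn => (max_eq_right hn).symm)).cesaroMean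
  refine le_of_tendsto_of_tendsto' h.norm hmax fun N => ?_
  simp only [cesaroMean, norm_smul, Real.norm_eq_abs, abs_inv, Nat.abs_cast, smul_eq_mul]
  gcongr
  exact (norm_sum_le _ _).trans (sum_le_sum fun n _ => le_max_left _ _)

end Cesaro

section RCLike

variable {𝕜 : Type*} [RCLike 𝕜]

theorem tendsto_cesaroMean_pow_zero {ξ : 𝕜} (hξ : ξ ≠ 1) (hξ_le : ‖ξ‖ ≤ 1) :
    Tendsto (cesaroMean (ξ ^ ·)) atTop (𝓝 0) := by
  refine squeeze_zero_norm (fun N => ?_) (tendsto_const_div_atTop_nhds_zero_nat (2 / ‖ξ - 1‖))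
  have hpow : ‖ξ ^ N - 1‖ ≤ 2 := by
    calc ‖ξ ^ N - 1‖ ≤ ‖ξ‖ ^ N + ‖(1 : 𝕜)‖ := (norm_sub_le _ _).trans_eq (by rw [norm_pow])
      _ ≤ 2 := by simp only [norm_one]; linarith [pow_le_one₀ (norm_nonneg ξ) hξ_le (n := N)]
  rw [cesaroMean, geom_sum_eq hξ, norm_smul, norm_div, Real.norm_eq_abs, abs_inv, Nat.abs_cast,
    inv_mul_eq_div]
  gcongr

theorem tendsto_cesaroMean_mul_pow_zero {u : ℕ → 𝕜} {l : 𝕜} (hu : Tendsto u atTop (𝓝 l))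
    {ξ : 𝕜} (hξ : ξ ≠ 1) (hξ_le : ‖ξ‖ ≤ 1) :
    Tendsto (cesaroMean fun n => u n * ξ ^ n) atTop (𝓝 0) := by
  have hnull : Tendsto (fun n => (u n - l) * ξ ^ n) atTop (𝓝 0) :=
    (tendsto_sub_nhds_zero_iff.2 hu).zero_mul_isBoundedUnder_le
      (isBoundedUnder_of ⟨1, fun n => by simpa using pow_le_one₀ (norm_nonneg ξ) hξ_le⟩)
  have hsplit := hnull.cesaroMean.add ((tendsto_cesaroMean_pow_zero hξ hξ_le).const_mul l)
  rw [mul_zero, add_zero] at hsplit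
  refine hsplit.congr fun N => ?_
  simp only [cesaroMean, mul_sum, mul_smul_comm, ← smul_add, ← sum_add_distrib]
  ring_nf

theorem Polynomial.tendsto_eval_div_pow_atTop (p : 𝕜[X]) {d : ℕ} (hp : p.natDegree ≤ d) :
    Tendsto (fun n : ℕ => p.eval (n : 𝕜) / (n : 𝕜) ^ d) atTop (𝓝 (p.coeff d)) := by
  have hrev : Tendsto (fun n : ℕ => (p.reflect d).eval (n : 𝕜)⁻¹) atTop (𝓝 (p.coeff d)) := by
    simpa [Function.comp_def, ← coeff_zero_eq_eval_zero, coeff_reflect] using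
      ((p.reflect d).continuous.tendsto 0).comp tendsto_inv_atTop_nhds_zero_nat
  refine hrev.congr' ?_
  filter_upwards [eventually_ne_atTop 0] with n hn
  have : Invertible (n : 𝕜) := invertibleOfNonzero (Nat.cast_ne_zero.2 hn)
  rw [eq_div_iff (pow_ne_zero _ (Nat.cast_ne_zero.2 hn)), ← invOf_eq_inv, eval, eval,
    eval₂_reflect_mul_pow _ _ _ _ hp]

section ExpPolySum

variable {ι : Type*} [Fintype ι]

/-- The sequence `g`. -/
def expPolySum (η : ι → 𝕜) (γ : ι → 𝕜[X]) (n : ℕ) : 𝕜 :=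
  ∑ i, (γ i).eval (n : 𝕜) * η i ^ n

variable {η : ι → 𝕜} {γ : ι → 𝕜[X]}

theorem norm_expPolySum_mul_inv_pow (hmod : ∀ i, ‖η i‖ = 1) (j : ι) (n : ℕ) :
    ‖expPolySum η γ n * (η j)⁻¹ ^ n‖ = ‖expPolySum η γ n‖ := by
  simp [hmod]

theorem tendsto_cesaroMean_expPolySum (hinj : Function.Injective η) (hmod : ∀ i, ‖η i‖ = 1)
    {d : ℕ} (hdeg : ∀ i, (γ i).natDegree ≤ d) (j : ι) :
    Tendsto (cesaroMean fun n => expPolySum η γ n * (η j)⁻¹ ^ n / (n : 𝕜) ^ d) atTop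
      (𝓝 ((γ j).coeff d)) := by
  classical
  have hne : η j ≠ 0 := norm_ne_zero_iff.1 (by simp [hmod])
  have hterm : ∀ i, Tendsto (cesaroMean fun n : ℕ =>
      (γ i).eval (n : 𝕜) / (n : 𝕜) ^ d * (η i / η j) ^ n) atTop
      (𝓝 (if i = j then (γ j).coeff d else 0)) := by
    intro i
    split_ifs with hij
    · subst hij
      simpa [div_self hne] using ((γ i).tendsto_eval_div_pow_atTop (hdeg i)).cesaroMean
    · refine tendsto_cesaroMean_mul_pow_zero ((γ i).tendsto_eval_div_pow_atTop (hdeg i)) ?_ ?_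
      · exact fun h => hij (hinj ((div_eq_one_iff_eq hne).1 h))
      · simp [hmod]
  have hsum := tendsto_finsetSum univ fun i _ => hterm i
  rw [sum_ite_eq' univ j, if_pos (mem_univ j), ← cesaroMean_sum] at hsum
  refine hsum.congr fun N => congrArg (cesaroMean · N) (funext fun n => ?_)
  simp only [expPolySum, sum_mul, sum_div, div_pow]
  refine sum_congr rfl fun i _ => ?_
  ring

theorem natDegree_eq_zero_of_eventually_norm_expPolySum_le (hinj : Function.Injective η)
    (hmod : ∀ i, ‖η i‖ = 1) (hγ : ∀ i, γ i ≠ 0) {G : ℝ}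
    (hbdd : ∀ᶠ n in atTop, ‖expPolySum η γ n‖ ≤ G) (i : ι) : (γ i).natDegree = 0 := by
  set d := univ.sup fun i => (γ i).natDegree
  have hdeg i : (γ i).natDegree ≤ d := le_sup (f := fun i => (γ i).natDegree) (mem_univ i)
  by_contra hi
  have hd : d ≠ 0 := fun hd => hi (Nat.le_zero.1 (hd ▸ hdeg i))
  obtain ⟨j, -, hj : d = (γ j).natDegree⟩ :=
    exists_mem_eq_sup univ ⟨i, mem_univ i⟩ fun i => (γ i).natDegree
  have hzero : Tendsto (fun n : ℕ => expPolySum η γ n * (η j)⁻¹ ^ n / (n : 𝕜) ^ d) atTop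
      (𝓝 0) := by
    refine squeeze_zero_norm' ?_ ((tendsto_const_nhds (x := G)).div_atTop
      ((tendsto_pow_atTop hd).comp tendsto_natCast_atTop_atTop))
    filter_upwards [hbdd] with n hn
    rw [norm_div, norm_expPolySum_mul_inv_pow hmod, norm_pow, RCLike.norm_natCast]
    exact div_le_div_of_nonneg_right hn (by positivity)
  have hcoeff := tendsto_nhds_unique (tendsto_cesaroMean_expPolySum hinj hmod hdeg j)
    hzero.cesaroMean
  rw [hj, coeff_natDegree, leadingCoeff_eq_zero] at hcoeff
  exact hγ j hcoeff

end ExpPolySum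

end RCLike

theorem turan_bounded_exp_poly_sum_general
    (r : ℕ) (η : Fin r → ℂ) (γ : Fin r → Polynomial ℂ)
    (hinj : Function.Injective η)
    (hmod : ∀ i, ‖η i‖ = 1)
    (hγ : ∀ i, γ i ≠ 0)
    (G : ℝ) (n₀ : ℕ)
    (hbdd : ∀ n : ℕ, n₀ ≤ n →
      ‖∑ i, (γ i).eval (n : ℂ) * η i ^ n‖ ≤ G) :
    ∀ i, ∃ c : ℂ, γ i = Polynomial.C c ∧ ‖c‖ ≤ G := by
  have hbdd' : ∀ᶠ n in atTop, ‖expPolySum η γ n‖ ≤ G := eventually_atTop.2 ⟨n₀, hbdd⟩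
  have hdeg := natDegree_eq_zero_of_eventually_norm_expPolySum_le hinj hmod hγ hbdd'
  intro i
  refine ⟨(γ i).coeff 0, eq_C_of_natDegree_eq_zero (hdeg i), ?_⟩
  have hlim := tendsto_cesaroMean_expPolySum hinj hmod (fun i => (hdeg i).le) i
  simp only [pow_zero, div_one] at hlim
  refine norm_le_of_tendsto_cesaroMean ?_ hlim
  filter_upwards [hbdd'] with n hn
  rwa [norm_expPolySum_mul_inv_pow hmod]

theorem turan_bounded_exp_poly_sum
    (r : ℕ) (η : Fin r → ℂ) (γ : Fin r → Polynomial ℂ)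
    (hinj : Function.Injective η)
    (hmod : ∀ i, ‖η i‖ = 1)
    (hγ : ∀ i, γ i ≠ 0)
    (G : ℝ) (hG : 0 < G) (n₀ : ℕ)
    (hbdd : ∀ n : ℕ, n₀ ≤ n →
      ‖∑ i, (γ i).eval (n : ℂ) * η i ^ n‖ ≤ G) :
    ∀ i, ∃ c : ℂ, γ i = Polynomial.C c ∧ ‖c‖ ≤ G :=
  turan_bounded_exp_poly_sum_general r η γ hinj hmod hγ G n₀ hbdd
end

section
/- Let r ≥ 2 and h > 1 be real. There exists a linear recurrence sequence (u_n) of order r over C such that u_n ≠ 0 for all n, |u_n| ≥ c_1 h^n for infinitely many n (for some c_1 > 0), and |u_n| ≤ c_2 h^{-n} for infinitely many n (for some c_2 > 0). -/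
/-!
By Baire category, some irrational `x` satisfies `|N x - m| < ε N` for infinitely many `N`,
however fast `ε → 0`. Then `η = exp (2πix)` lies on the unit circle, is not a root of unity, and
`‖η ^ N - 1‖` is tiny for infinitely many `N`. The sequence `uₙ = hⁿ (η ^ (n + 1) - 1)` never
vanishes; it is `≥ ‖η - 1‖ hⁿ / 2` when `η ^ n ≈ 1` and `≤ hⁿ ε (n + 1) ≤ h⁻ⁿ` when
`η ^ (n + 1) ≈ 1`, for `ε N = h ^ (-2N)`. As `uₙ = η (hη)ⁿ - hⁿ`, it satisfies the recurrence of any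
monic polynomial vanishing at `hη` and `h`; padding these two roots by `r - 2` further nonzero
ones gives order `r`.
-/

open Finset Polynomial Filter Topology

theorem eventually_residual_frequently_near_int {ε : ℕ → ℝ} (hε : ∀ n, 0 < ε n) :
    ∀ᶠ x in residual ℝ, ∃ᶠ n : ℕ in atTop, ∃ m : ℤ, |n * x - (m : ℝ)| < ε n := by
  simp only [frequently_atTop]
  refine eventually_countable_forall.2 fun K => residual_of_dense_open ?_ ?_
  · simp only [Set.ofPred_exists, Set.ofPred_and]
    exact isOpen_iUnion fun n => isOpen_const.inter <| isOpen_iUnion fun m =>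
      isOpen_lt (by fun_prop) continuous_const
  · refine Rat.denseRange_cast.mono ?_
    rintro _ ⟨q, rfl⟩
    refine ⟨q.den * (K + 1), by nlinarith [q.pos], q.num * (K + 1), ?_⟩
    have hq : (q.den : ℝ) * q = q.num := by exact_mod_cast Rat.den_mul_eq_num q
    push_cast
    rw [mul_right_comm, hq, sub_self, abs_zero]
    exact hε _

theorem exists_irrational_frequently_near_int {ε : ℕ → ℝ} (hε : ∀ n, 0 < ε n) :
    ∃ x : ℝ, Irrational x ∧ ∃ᶠ n : ℕ in atTop, ∃ m : ℤ, |n * x - (m : ℝ)| < ε n :=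
  (dense_of_mem_residual
    (eventually_residual_irrational.and (eventually_residual_frequently_near_int hε))).nonempty

open Complex Real in
theorem exists_norm_eq_one_frequently_pow_near_one {ε : ℕ → ℝ} (hε : ∀ n, 0 < ε n) :
    ∃ η : ℂ, ‖η‖ = 1 ∧ (∀ n ≠ 0, η ^ n ≠ 1) ∧ ∃ᶠ n in atTop, ‖η ^ n - 1‖ < ε n := by
  obtain ⟨x, hx_irr, hx⟩ :=
    exists_irrational_frequently_near_int fun n => div_pos (hε n) two_pi_pos
  have exp_pow (n : ℕ) :
      exp (I * (2 * π * x : ℝ)) ^ n = exp (I * (2 * π * (n * x) : ℝ)) := by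
    rw [← Complex.exp_nat_mul]; push_cast; ring_nf
  refine ⟨exp (I * (2 * π * x : ℝ)), norm_exp_I_mul_ofReal _, fun n hn h1 => ?_, hx.mono ?_⟩
  · rw [exp_pow, Complex.exp_eq_one_iff] at h1
    obtain ⟨k, hk⟩ := h1
    refine (hx_irr.natCast_mul hn).ne_int k (ofReal_injective ?_)
    apply mul_right_cancel₀ two_pi_I_ne_zero
    push_cast at hk ⊢
    linear_combination hk
  · rintro n ⟨m, hm⟩
    have hshift : exp (I * (2 * π * (n * x) : ℝ)) = exp (I * (2 * π * (n * x - m) : ℝ)) := by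
      rw [Complex.exp_eq_exp_iff_exists_int]
      exact ⟨m, by push_cast; ring⟩
    calc ‖exp (I * (2 * π * x : ℝ)) ^ n - 1‖
        = ‖exp (I * (2 * π * (n * x - m) : ℝ)) - 1‖ := by rw [exp_pow, hshift]
      _ ≤ ‖2 * π * (n * x - m)‖ := norm_exp_I_mul_ofReal_sub_one_le
      _ = 2 * π * |n * x - m| := by rw [Real.norm_eq_abs, abs_mul, abs_of_pos two_pi_pos]
      _ < ε n := by rwa [lt_div_iff₀' two_pi_pos] at hm

theorem exists_superset_card_eq_of_notMem {α : Type*} [Infinite α] [DecidableEq α]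
    {s : Finset α} {c : α} (hc : c ∉ s) {n : ℕ} (hn : #s ≤ n) :
    ∃ t : Finset α, s ⊆ t ∧ c ∉ t ∧ #t = n := by
  obtain ⟨t, hst, ht⟩ := Infinite.exists_superset_card_eq (insert c s) (n + 1)
    (by rw [card_insert_of_notMem hc]; omega)
  refine ⟨t.erase c, fun a ha => mem_erase.2 ⟨ne_of_mem_of_not_mem ha hc,
    hst (mem_insert_of_mem ha)⟩, notMem_erase c t, ?_⟩
  rw [card_erase_of_mem (hst (mem_insert_self c s)), ht, Nat.add_sub_cancel]

theorem exists_coeff_forall_isRoot {R : Type*} [CommRing R] [IsDomain R] (S : Finset R)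
    (hS : 0 ∉ S) :
    ∃ A : ℕ → R, A 0 ≠ 0 ∧ ∀ z ∈ S, (X ^ #S + ∑ i ∈ range #S, C (A i) * X ^ i).eval z = 0 := by
  set P : R[X] := ∏ z ∈ S, (X - C z)
  refine ⟨P.coeff, ?_, fun z hz => ?_⟩
  · rw [coeff_zero_eq_eval_zero, eval_prod, prod_ne_zero_iff]
    intro a ha
    simpa using ne_of_mem_of_not_mem ha hS
  · have hP : P.Monic := monic_prod_X_sub_C id S
    have hP_deg : P.natDegree = #S := natDegree_finsetProd_X_sub_C_eq_card S id
    rw [← hP_deg, ← hP.as_sum, eval_prod]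
    exact prod_eq_zero hz (by simp)

section Recurrence

variable {R : Type*} [CommRing R] {r : ℕ} {A : ℕ → R}

theorem pow_add_recurrence {z : R} (hz : (X ^ r + ∑ i ∈ range r, C (A i) * X ^ i).eval z = 0)
    (n : ℕ) : z ^ (n + r) + ∑ i ∈ range r, A i * z ^ (n + i) = 0 := by
  simp only [eval_add, eval_pow, eval_X, eval_finsetSum, eval_mul, eval_C] at hz
  have hsum : ∑ i ∈ range r, A i * z ^ (n + i) = z ^ n * ∑ i ∈ range r, A i * z ^ i := by
    rw [mul_sum]; exact sum_congr rfl fun i _ => by ring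
  rw [hsum]
  linear_combination z ^ n * hz

theorem add_pow_recurrence {z w : R} (hz : (X ^ r + ∑ i ∈ range r, C (A i) * X ^ i).eval z = 0)
    (hw : (X ^ r + ∑ i ∈ range r, C (A i) * X ^ i).eval w = 0) (a b : R) (n : ℕ) :
    (a * z ^ (n + r) + b * w ^ (n + r)) +
      ∑ i ∈ range r, A i * (a * z ^ (n + i) + b * w ^ (n + i)) = 0 := by
  have hsum : ∑ i ∈ range r, A i * (a * z ^ (n + i) + b * w ^ (n + i)) =
      a * ∑ i ∈ range r, A i * z ^ (n + i) + b * ∑ i ∈ range r, A i * w ^ (n + i) := by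
    rw [mul_sum, mul_sum, ← sum_add_distrib]; exact sum_congr rfl fun i _ => by ring
  rw [hsum]
  linear_combination a * pow_add_recurrence hz n + b * pow_add_recurrence hw n

end Recurrence

/-- The paper's `γ₁ α₁ⁿ + γ₂ α₂ⁿ` with `α₁ = Dη`, `α₂ = D`, `γ₁ = η`, `γ₂ = -1`. -/
noncomputable def fluctSeq (D : ℝ) (η : ℂ) (n : ℕ) : ℂ := (D : ℂ) ^ n * (η ^ (n + 1) - 1)

theorem fluctSeq_eq_add (D : ℝ) (η : ℂ) (n : ℕ) :
    fluctSeq D η n = η * (D * η) ^ n + (-1) * (D : ℂ) ^ n := by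
  rw [fluctSeq]; ring

section FluctSeq

variable {D : ℝ} {η : ℂ}

theorem norm_fluctSeq (hD : 0 ≤ D) (n : ℕ) :
    ‖fluctSeq D η n‖ = D ^ n * ‖η ^ (n + 1) - 1‖ := by
  rw [fluctSeq, norm_mul, norm_pow, Complex.norm_real, Real.norm_of_nonneg hD]

theorem fluctSeq_ne_zero (hD : D ≠ 0) (hη : ∀ n ≠ 0, η ^ n ≠ 1) (n : ℕ) : fluctSeq D η n ≠ 0 :=
  mul_ne_zero (pow_ne_zero _ (Complex.ofReal_ne_zero.2 hD))
    (sub_ne_zero.2 (hη _ n.succ_ne_zero))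

theorem half_norm_sub_one_le_norm_pow_succ_sub_one (hη : ‖η‖ = 1) {n : ℕ}
    (hn : ‖η ^ n - 1‖ ≤ ‖η - 1‖ / 2) : ‖η - 1‖ / 2 ≤ ‖η ^ (n + 1) - 1‖ := by
  have key := norm_sub_le (η ^ (n + 1) - 1) (η * (η ^ n - 1))
  rw [norm_mul, hη, one_mul, show η ^ (n + 1) - 1 - η * (η ^ n - 1) = η - 1 by ring] at key
  linarith

theorem infinite_setOf_le_norm_fluctSeq (hD : 0 ≤ D) (hη : ‖η‖ = 1) (hη1 : η ≠ 1)
    {ε : ℕ → ℝ} (hε : Tendsto ε atTop (𝓝 0)) (hη_near : ∃ᶠ n in atTop, ‖η ^ n - 1‖ < ε n) :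
    {n : ℕ | ‖η - 1‖ / 2 * D ^ n ≤ ‖fluctSeq D η n‖}.Infinite := by
  have hε_small := hε.eventually (ge_mem_nhds (half_pos (norm_pos_iff.2 (sub_ne_zero.2 hη1))))
  refine Nat.frequently_atTop_iff_infinite.1 ((hη_near.and_eventually hε_small).mono ?_)
  rintro n ⟨hn, hεn⟩
  rw [norm_fluctSeq hD, mul_comm]
  exact mul_le_mul_of_nonneg_left
    (half_norm_sub_one_le_norm_pow_succ_sub_one hη (hn.le.trans hεn)) (pow_nonneg hD n)

theorem infinite_setOf_norm_fluctSeq_le (hD : 0 ≤ D) {ε : ℕ → ℝ}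
    (hη_near : ∃ᶠ n in atTop, ‖η ^ n - 1‖ < ε n) :
    {n : ℕ | ‖fluctSeq D η n‖ ≤ D ^ n * ε (n + 1)}.Infinite := by
  rw [← map_add_atTop_eq_nat 1, frequently_map] at hη_near
  refine Nat.frequently_atTop_iff_infinite.1 (hη_near.mono fun n hn => ?_)
  rw [norm_fluctSeq hD]
  exact mul_le_mul_of_nonneg_left hn.le (pow_nonneg hD n)

end FluctSeq

theorem pow_mul_inv_sq_pow_succ_le {h : ℝ} (hh : 1 ≤ h) (n : ℕ) :
    h ^ n * (h ^ 2)⁻¹ ^ (n + 1) ≤ (h ^ n)⁻¹ := by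
  have hh0 : h ≠ 0 := by positivity
  calc h ^ n * (h ^ 2)⁻¹ ^ (n + 1) ≤ h ^ n * (h ^ 2)⁻¹ ^ n :=
        mul_le_mul_of_nonneg_left (pow_le_pow_of_le_one (by positivity)
          (inv_le_one_of_one_le₀ (one_le_pow₀ hh)) n.le_succ) (by positivity)
    _ = (h ^ n)⁻¹ := by
        rw [inv_pow, sq, mul_pow, mul_inv, ← mul_assoc, mul_inv_cancel₀ (pow_ne_zero n hh0),
          one_mul]

theorem lrs_with_large_fluctuation
    (r : ℕ) (hr : 2 ≤ r) (h : ℝ) (hh : 1 < h) :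
    ∃ (A : ℕ → ℂ) (u : ℕ → ℂ),
      A 0 ≠ 0 ∧
      (∃ S : Finset ℂ, S.card = r ∧ ∀ z ∈ S,
        (Polynomial.X ^ r + ∑ i ∈ Finset.range r,
          Polynomial.C (A i) * Polynomial.X ^ i).eval z = 0) ∧
      (∀ n : ℕ, u (n + r) + ∑ i ∈ Finset.range r, A i * u (n + i) = 0) ∧
      (∀ n : ℕ, u n ≠ 0) ∧
      (∃ c₁ : ℝ, 0 < c₁ ∧ {n : ℕ | c₁ * h ^ n ≤ ‖u n‖}.Infinite) ∧
      (∃ c₂ : ℝ, 0 < c₂ ∧ {n : ℕ | ‖u n‖ ≤ c₂ * (h ^ n)⁻¹}.Infinite) := by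
  have hh0 : 0 < h := by linarith
  have hε_lt : (h ^ 2)⁻¹ < 1 := inv_lt_one_of_one_lt₀ (one_lt_pow₀ hh two_ne_zero)
  obtain ⟨η, hη_norm, hη_pow, hη_near⟩ :=
    exists_norm_eq_one_frequently_pow_near_one (ε := fun n => (h ^ 2)⁻¹ ^ n) fun n => by positivity
  have hη0 : η ≠ 0 := norm_ne_zero_iff.1 (by simp [hη_norm])
  have hη1 : η ≠ 1 := by simpa using hη_pow 1 one_ne_zero
  obtain ⟨S, hS_roots, hS0, hS_card⟩ := exists_superset_card_eq_of_notMem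
    (s := {(h : ℂ) * η, (h : ℂ)}) (c := 0) (by simp [hη0, hh0.ne', eq_comm])
    (card_le_two.trans hr)
  obtain ⟨A, hA0, hA⟩ := exists_coeff_forall_isRoot S hS0
  rw [hS_card] at hA
  refine ⟨A, fluctSeq h η, hA0, ⟨S, hS_card, hA⟩, fun n => ?_,
    fluctSeq_ne_zero hh0.ne' hη_pow, ⟨‖η - 1‖ / 2, half_pos (norm_pos_iff.2 (sub_ne_zero.2 hη1)), ?_⟩,
    ⟨1, one_pos, ?_⟩⟩
  · simp only [fluctSeq_eq_add]
    exact add_pow_recurrence (hA _ (hS_roots (by simp))) (hA _ (hS_roots (by simp))) η (-1) n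
  · exact infinite_setOf_le_norm_fluctSeq hh0.le hη_norm hη1
      (tendsto_pow_atTop_nhds_zero_of_lt_one (by positivity) hε_lt) hη_near
  · exact (infinite_setOf_norm_fluctSeq_le hh0.le hη_near).mono fun n hn =>
      (hn.trans (pow_mul_inv_sq_pow_succ_le hh.le n)).trans_eq (one_mul _).symm
end

section
/- There exists a sequence of integers (a_n) which is a nearly linear recurrence sequence, such that limsup_{n→∞} |a_n| = ∞, a_n = 0 for infinitely many n, and the set {n : a_n = 0} contains no infinite arithmetic progression. -/
open Finset

/-- distance from n to the nearest perfect square -/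
def nsqDist (n : ℕ) : ℕ :=
  min (n - Nat.sqrt n * Nat.sqrt n) ((Nat.sqrt n + 1) * (Nat.sqrt n + 1) - n)

lemma nsqDist_sq (k : ℕ) : nsqDist (k * k) = 0 := by
  unfold nsqDist
  rw [Nat.sqrt_eq]
  omega

lemma nsqDist_eq_zero {n : ℕ} (h : nsqDist n = 0) : n = Nat.sqrt n * Nat.sqrt n := by
  unfold nsqDist at h
  have h1 : Nat.sqrt n * Nat.sqrt n ≤ n := Nat.sqrt_le n
  have h2 : n < (Nat.sqrt n + 1) * (Nat.sqrt n + 1) := Nat.lt_succ_sqrt n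
  omega

lemma sqrt_mid (s : ℕ) : Nat.sqrt (s * s + s) = s := by
  have hl : s ≤ Nat.sqrt (s * s + s) := Nat.le_sqrt.mpr (Nat.le_add_right _ _)
  have hu : Nat.sqrt (s * s + s) < s + 1 := Nat.sqrt_lt.mpr (by nlinarith)
  omega

lemma nsqDist_mid (s : ℕ) : nsqDist (s * s + s) = s := by
  unfold nsqDist
  rw [sqrt_mid]
  have e : (s + 1) * (s + 1) = s * s + 2 * s + 1 := by ring
  rw [e]
  generalize s * s = A
  omega

lemma nsqDist_lip (n : ℕ) : |((nsqDist (n+1) : ℤ)) - nsqDist n| ≤ 1 := by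
  unfold nsqDist
  have h1 : Nat.sqrt n * Nat.sqrt n ≤ n := Nat.sqrt_le n
  have h2 : n < (Nat.sqrt n + 1) * (Nat.sqrt n + 1) := Nat.lt_succ_sqrt n
  have h3 : Nat.sqrt (n+1) * Nat.sqrt (n+1) ≤ n + 1 := Nat.sqrt_le (n+1)
  have h4 : n + 1 < (Nat.sqrt (n+1) + 1) * (Nat.sqrt (n+1) + 1) := Nat.lt_succ_sqrt (n+1)
  have hst : Nat.sqrt n ≤ Nat.sqrt (n+1) := Nat.sqrt_le_sqrt (Nat.le_succ n)
  have hts : Nat.sqrt (n+1) ≤ Nat.sqrt n + 1 := by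
    have h5 : Nat.sqrt (n+1) ≤ Nat.sqrt ((Nat.sqrt n + 1) * (Nat.sqrt n + 1)) :=
      Nat.sqrt_le_sqrt (Nat.succ_le_of_lt h2)
    rwa [Nat.sqrt_eq] at h5
  rw [abs_le]
  generalize hB : Nat.sqrt (n+1) = t at *
  generalize hA : Nat.sqrt n = s at *
  rcases (by omega : t = s ∨ t = s + 1) with h | h <;> subst h
  · simp only [show (t+1)*(t+1) = t*t+2*t+1 from by ring] at *
    generalize t * t = A at *
    omega
  · simp only [show (s+1+1)*(s+1+1) = s*s+4*s+4 from by ring,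
      show (s+1)*(s+1) = s*s+2*s+1 from by ring] at *
    generalize s * s = A at *
    omega

theorem skolem_mahler_lech_fails_for_nlrs :
    ∃ a : ℕ → ℤ,
      (∃ d : ℕ, 1 ≤ d ∧ ∃ A : ℕ → ℂ, ∃ M : ℝ, ∀ n : ℕ,
        ‖(a (n + d) : ℂ) + ∑ i ∈ Finset.range d, A i * (a (n + i) : ℂ)‖ ≤ M) ∧
      (∀ B : ℝ, {n : ℕ | B < |(a n : ℝ)|}.Infinite) ∧
      {n : ℕ | a n = 0}.Infinite ∧
      (∀ u v : ℕ, 1 ≤ v → ¬ (∀ m : ℕ, a (u + m * v) = 0)) := by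
  refine ⟨fun n => (nsqDist n : ℤ), ?_, ?_, ?_, ?_⟩
  · -- nearly linear recurrence of order 1
    refine ⟨1, le_refl 1, fun _ => -1, 1, fun n => ?_⟩
    have e : ((nsqDist (n+1) : ℤ) : ℂ) + ∑ i ∈ Finset.range 1, (-1 : ℂ) * ((nsqDist (n+i) : ℤ) : ℂ)
        = (((nsqDist (n+1) : ℤ) - nsqDist n : ℤ) : ℂ) := by
      rw [Finset.sum_range_one]
      push_cast
      ring
    show ‖((nsqDist (n+1) : ℤ) : ℂ) + ∑ i ∈ Finset.range 1, (-1 : ℂ) * ((nsqDist (n+i) : ℤ) : ℂ)‖ ≤ (1 : ℝ)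
    rw [e, Complex.norm_intCast]
    exact_mod_cast nsqDist_lip n
  · -- unbounded
    intro B
    apply Set.infinite_of_not_bddAbove
    rintro ⟨b, hb⟩
    set s := max b ⌈B⌉₊ + 1 with hsdef
    have hmem : s * s + s ∈ {n : ℕ | B < |(((fun n => (nsqDist n : ℤ)) n : ℤ) : ℝ)|} := by
      simp only [Set.mem_setOf_eq, nsqDist_mid]
      have h1 : B ≤ (⌈B⌉₊ : ℝ) := Nat.le_ceil B
      have h2n : ⌈B⌉₊ < s := Nat.lt_of_le_of_lt (le_max_right b ⌈B⌉₊) (Nat.lt_succ_self _)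
      have h2 : (⌈B⌉₊ : ℝ) < ((s : ℤ) : ℝ) := by exact_mod_cast h2n
      rw [abs_of_nonneg (by positivity)]
      linarith
    have hle := hb hmem
    have hbs : b < s := Nat.lt_of_le_of_lt (le_max_left b ⌈B⌉₊) (Nat.lt_succ_self _)
    have : s ≤ s * s + s := Nat.le_add_left s (s * s)
    omega
  · -- infinitely many zeros
    apply Set.infinite_of_injective_forall_mem (f := fun k : ℕ => k * k)
    · exact fun a b hab => Nat.mul_self_inj.mp hab
    · intro k
      simp only [Set.mem_setOf_eq, nsqDist_sq, Nat.cast_zero]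
  · -- no infinite AP of zeros
    intro u v hv h
    have hz : ∀ m : ℕ, ∃ k : ℕ, u + m * v = k * k := by
      intro m
      have h0 : nsqDist (u + m * v) = 0 := by
        have := h m
        simpa using this
      exact ⟨Nat.sqrt (u + m * v), nsqDist_eq_zero h0⟩
    obtain ⟨x, hx⟩ := hz v
    obtain ⟨y, hy⟩ := hz (v + 1)
    have hy' : u + (v * v + v) = y * y := by rw [← hy]; ring_nf
    have hxv : v ≤ x := by
      by_contra hc
      push_neg at hc
      have : x * x < v * v := Nat.mul_lt_mul_of_lt_of_le hc (le_of_lt hc) hv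
      omega
    have hyx : x + 1 ≤ y := by
      by_contra hc
      push_neg at hc
      have hyx' : y ≤ x := by omega
      have : y * y ≤ x * x := Nat.mul_le_mul hyx' hyx'
      omega
    have hsq : (x+1) * (x+1) ≤ y * y := Nat.mul_le_mul hyx hyx
    have e : (x+1) * (x+1) = x * x + 2 * x + 1 := by ring
    omega
end

section
/- Let a, b be positive real numbers with a/b irrational, and let C > 1. Then there exists a real number c such that the inequality |a·k - b·m - c| < C^{-(k+m)} has infinitely many solutions in pairs of non-negative integers (k, m). -/
open Filter Topology

/-- Good approximations: for every `ε > 0` there is a pair `(k, m)` of naturals with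
`k ≥ 1` and `|a k - b m| < ε`. -/
lemma approx_lemma (a b : ℝ) (ha : 0 < a) (hb : 0 < b) {ε : ℝ} (hε : 0 < ε) :
    ∃ p : ℕ × ℕ, 1 ≤ p.1 ∧ |a * p.1 - b * p.2| < ε := by
  set ε' : ℝ := min ε b with hε'def
  have hε' : 0 < ε' := lt_min hε hb
  have hε'b : ε' ≤ b := min_le_right _ _
  have hε'ε : ε' ≤ ε := min_le_left _ _
  obtain ⟨n, hn⟩ := exists_nat_gt (b / ε')
  have hnpos : 0 < n := by
    by_contra h
    push_neg at h
    interval_cases n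
    simp only [Nat.cast_zero] at hn
    nlinarith [div_pos hb hε']
  obtain ⟨j, k, hk0, hkn, hjk⟩ := Real.exists_int_int_abs_mul_sub_le (a / b) hnpos
  have hkpos : (0 : ℝ) < (k : ℝ) := by exact_mod_cast hk0
  have key : |a * k - b * j| < ε' := by
    have h1 : a * k - b * j = ((k : ℝ) * (a / b) - j) * b := by
      field_simp
    have h2 : |a * k - b * j| ≤ (1 / (n + 1)) * b := by
      rw [h1, abs_mul, abs_of_pos hb]
      exact mul_le_mul_of_nonneg_right hjk hb.le
    have h3 : (1 / ((n : ℝ) + 1)) * b < ε' := by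
      rw [div_mul_eq_mul_div, one_mul, div_lt_iff₀ (by positivity)]
      rw [div_lt_iff₀ hε'] at hn
      nlinarith
    linarith
  have hj0 : 0 ≤ j := by
    by_contra h
    push_neg at h
    have hj : (j : ℝ) ≤ -1 := by exact_mod_cast (by omega : j ≤ -1)
    have habs := abs_lt.mp key
    nlinarith [mul_le_mul_of_nonneg_left hj hb.le, mul_pos ha hkpos]
  refine ⟨⟨k.toNat, j.toNat⟩, ?_, ?_⟩
  · simp only
    omega
  · have hk' : ((k.toNat : ℕ) : ℝ) = (k : ℝ) := by
      rw [← Int.cast_natCast, Int.toNat_of_nonneg hk0.le]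
    have hj' : ((j.toNat : ℕ) : ℝ) = (j : ℝ) := by
      rw [← Int.cast_natCast, Int.toNat_of_nonneg hj0]
    simpa [hk', hj'] using lt_of_lt_of_le key hε'ε

theorem inhomogeneous_approximation
    (a b : ℝ) (ha : 0 < a) (hb : 0 < b) (hirr : Irrational (a / b))
    (C : ℝ) (hC : 1 < C) :
    ∃ c : ℝ,
      {p : ℕ × ℕ | |a * p.1 - b * p.2 - c| < (C ^ (p.1 + p.2))⁻¹}.Infinite := by
  have hC0 : (0 : ℝ) < C := lt_trans one_pos hC
  -- the target accuracy at state `p`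
  set E : ℕ × ℕ → ℝ := fun p => (1/2 : ℝ) ^ (p.1 + p.2 + 1) * (C ^ (p.1 + p.2))⁻¹ with hEdef
  have hEpos : ∀ p, 0 < E p := fun p => by positivity
  -- the choice of next increment
  have hstep : ∀ p : ℕ × ℕ, ∃ q : ℕ × ℕ, 1 ≤ q.1 ∧ |a * q.1 - b * q.2| < E p :=
    fun p => approx_lemma a b ha hb (hEpos p)
  choose step hstep1 hstep2 using hstep
  -- the cumulative sums
  set g : ℕ → ℕ × ℕ := fun n => Nat.rec ((0 : ℕ), (0 : ℕ))
    (fun _ q => (q.1 + (step q).1, q.2 + (step q).2)) n with hgdef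
  have hgsucc : ∀ n, g (n + 1) = ((g n).1 + (step (g n)).1, (g n).2 + (step (g n)).2) :=
    fun n => rfl
  set u : ℕ → ℝ := fun n => a * ((g n).1 : ℝ) - b * ((g n).2 : ℝ) with hudef
  have hu : ∀ n, |u (n + 1) - u n| < E (g n) := by
    intro n
    have : u (n + 1) - u n = a * ((step (g n)).1 : ℝ) - b * ((step (g n)).2 : ℝ) := by
      simp only [hudef, hgsucc n]
      push_cast
      ring
    rw [this]
    exact hstep2 (g n)
  -- the first coordinate is strictly monotone
  have hmono1 : StrictMono (fun n => (g n).1) := by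
    apply strictMono_nat_of_lt_succ
    intro n
    rw [hgsucc n]
    have := hstep1 (g n)
    omega
  have hS : ∀ n, n ≤ (g n).1 + (g n).2 := by
    intro n
    induction n with
    | zero => omega
    | succ n ih =>
      rw [hgsucc n]
      have := hstep1 (g n)
      simp only
      omega
  have hSmono : Monotone (fun n => (g n).1 + (g n).2) := by
    apply monotone_nat_of_le_succ
    intro n
    rw [hgsucc n]
    simp only
    omega
  -- bound E (g n) ≤ (1/2)^(n+1) * (C^(S m))⁻¹ for m ≤ n
  have hEbound : ∀ m n : ℕ, m ≤ n →
      E (g n) ≤ (1/2 : ℝ) ^ (n + 1) * (C ^ ((g m).1 + (g m).2))⁻¹ := by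
    intro m n hmn
    apply mul_le_mul
    · apply pow_le_pow_of_le_one (by norm_num) (by norm_num)
      have := hS n
      omega
    · apply inv_anti₀ (by positivity)
      exact pow_le_pow_right₀ hC.le (hSmono hmn)
    · positivity
    · positivity
  -- the sequence u is Cauchy
  have hdist : ∀ n, dist (u n) (u (n + 1)) ≤ 1 / 2 / 2 ^ n := by
    intro n
    rw [dist_comm, Real.dist_eq]
    have h1 := (hu n).le.trans (hEbound n n le_rfl)
    have h2 : (C ^ ((g n).1 + (g n).2))⁻¹ ≤ 1 := by
      rw [inv_le_one_iff₀]
      right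
      exact one_le_pow₀ hC.le
    calc |u (n + 1) - u n| ≤ (1/2 : ℝ) ^ (n + 1) * (C ^ ((g n).1 + (g n).2))⁻¹ := h1
      _ ≤ (1/2 : ℝ) ^ (n + 1) * 1 := by
          have hp : (0:ℝ) < (1/2 : ℝ) ^ (n + 1) := by positivity
          nlinarith
      _ = 1 / 2 / 2 ^ n := by
          rw [mul_one, div_pow, one_pow, pow_succ', div_div]
  have hcauchy : CauchySeq u := cauchySeq_of_le_geometric_two hdist
  obtain ⟨c, hc⟩ := cauchySeq_tendsto_of_complete hcauchy
  refine ⟨c, ?_⟩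
  -- distance from u n to c
  have hkey : ∀ n : ℕ, 1 ≤ n → |u n - c| < (C ^ ((g n).1 + (g n).2))⁻¹ := by
    intro n hn
    set B : ℝ := (C ^ ((g n).1 + (g n).2))⁻¹ with hBdef
    have hBpos : 0 < B := by positivity
    set v : ℕ → ℝ := fun i => u (i + n) with hvdef
    have hvtend : Tendsto v atTop (𝓝 c) := hc.comp (tendsto_add_atTop_nat n)
    have hvdist : ∀ i, dist (v i) (v (i + 1)) ≤ ((1/2 : ℝ) ^ (n + 1) * B) * (1/2 : ℝ) ^ i := by
      intro i
      have h1 := (hu (i + n)).le.trans (hEbound n (i + n) (Nat.le_add_left n i))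
      rw [hvdef]
      simp only
      rw [dist_comm, Real.dist_eq]
      have he : i + 1 + n = i + n + 1 := by omega
      calc |u (i + 1 + n) - u (i + n)| = |u (i + n + 1) - u (i + n)| := by rw [he]
        _ ≤ (1/2 : ℝ) ^ (i + n + 1) * B := h1
        _ = ((1/2 : ℝ) ^ (n + 1) * B) * (1/2 : ℝ) ^ i := by ring
    have hd := dist_le_of_le_geometric_of_tendsto₀ (1/2) ((1/2 : ℝ) ^ (n + 1) * B)
      (by norm_num) hvdist hvtend
    have hv0 : v 0 = u n := by simp only [hvdef, Nat.zero_add]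
    rw [hv0, Real.dist_eq] at hd
    have h2 : (1/2 : ℝ) ^ (n + 1) * B / (1 - 1/2) = (1/2 : ℝ) ^ n * B := by
      rw [pow_succ]
      ring
    rw [h2] at hd
    have h3 : (1/2 : ℝ) ^ n * B < B := by
      have : (1/2 : ℝ) ^ n < 1 := by
        apply pow_lt_one₀ (by norm_num) (by norm_num)
        omega
      nlinarith
    linarith
  -- the set is infinite
  apply Set.infinite_of_injective_forall_mem (f := fun n : ℕ => g (n + 1))
  · intro m n hmn
    simp only at hmn
    have h2 : (g (m + 1)).1 = (g (n + 1)).1 := by rw [hmn]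
    have h3 : Function.Injective fun k => (g k).1 := hmono1.injective
    have := h3 (a₁ := m + 1) (a₂ := n + 1) h2
    omega
  · intro n
    simp only [Set.mem_setOf_eq]
    exact hkey (n + 1) (by omega)
end

section
/- Let α, β be multiplicatively independent real numbers, both > 1, and let C > 1. Then there exists a real number γ > 1 such that the inequality |α^k - γ β^m| < C^{-(k+m)} has infinitely many solutions in pairs of positive integers (k, m). -/
/-!
With `a = log α` and `b = log β` the ratio `a / b` is irrational, so the natural multiples of `a`
are dense in the circle `ℝ / bℤ`; hence the numbers `k a - m b` with `k, m ≥ N` are dense in `ℝ`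
for every `N`. By Baire's theorem, for any positive tolerances `ε (k, m)` a residual set of `c`
satisfies `|k a - m b - c| < ε (k, m)` for infinitely many pairs. Pick such a `c ∈ (0, 1)` and put
`γ = exp c`: since `α ^ k - γ β ^ m = β ^ m (exp (k a - m b) - exp c)`, the choice
`ε (k, m) = (6 β ^ m C ^ (k + m))⁻¹` gives the required bound.
-/

open Real Filter Topology

theorem irrational_log_div_log {α β : ℝ} (hα : 0 < α) (hβ : 0 < β)
    (hmi : ∀ m n : ℤ, α ^ m * β ^ n = 1 → m = 0 ∧ n = 0) :
    Irrational (log α / log β) := by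
  rintro ⟨q, hq⟩
  have hβ1 : log β ≠ 0 := fun h ↦ by
    simpa using hmi 0 1 (by simp [eq_one_of_pos_of_log_eq_zero hβ h])
  have hlog : log α = q * log β := by rw [hq, div_mul_cancel₀ _ hβ1]
  have hden : (q : ℝ) * q.den = q.num := by exact_mod_cast q.mul_den_eq_num
  have hpow : α ^ (q.den : ℤ) * β ^ (-q.num) = 1 := by
    refine eq_one_of_pos_of_log_eq_zero (by positivity) ?_
    rw [log_mul (by positivity) (by positivity), log_zpow, log_zpow]
    push_cast
    linear_combination (q.den : ℝ) * hlog + log β * hden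
  exact q.den_nz (by exact_mod_cast (hmi _ _ hpow).1)

theorem exists_nat_nat_abs_mul_sub_mul_sub_lt {a b : ℝ} (ha : 0 < a) (hb : 0 < b)
    (hab : Irrational (a / b)) (x : ℝ) {ε : ℝ} (hε : 0 < ε) (N : ℕ) :
    ∃ k m : ℕ, N ≤ k ∧ N ≤ m ∧ |k * a - m * b - x| < ε := by
  have : Fact (0 < b) := ⟨hb⟩
  have hclust : MapClusterPt (x : AddCircle b) atTop (fun k : ℕ ↦ k • (a : AddCircle b)) :=
    ((mapClusterPt_atTop_nsmul_tfae _ _).out 0 3).2 (AddCircle.denseRange_zsmul_coe_iff.2 hab _)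
  have hU : ((↑) '' Metric.ball x ε : Set (AddCircle b)) ∈ 𝓝 (x : AddCircle b) :=
    (QuotientAddGroup.isOpenMap_coe _ Metric.isOpen_ball).mem_nhds ⟨x, Metric.mem_ball_self hε, rfl⟩
  -- Any `k ≥ K` forces the winding number `m` of `k a` near `x` to exceed `N`.
  obtain ⟨K, hK⟩ := exists_nat_gt ((x + ε + N * b) / a)
  obtain ⟨k, ⟨y, hy, hyk⟩, hk⟩ :=
    ((hclust.frequently hU).and_eventually (eventually_ge_atTop (max K N))).exists
  obtain ⟨m, hm⟩ := (AddCircle.coe_eq_zero_iff b).1 (show ((k * a - y : ℝ) : AddCircle b) = 0 by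
    rw [AddCircle.coe_sub, hyk]; simp)
  rw [Metric.mem_ball, Real.dist_eq, abs_lt] at hy
  rw [zsmul_eq_mul] at hm
  have hNm : (N : ℝ) < m := by
    have hKk : (K : ℝ) ≤ k := by exact_mod_cast (le_max_left K N).trans hk
    rw [div_lt_iff₀ ha] at hK
    nlinarith
  lift m to ℕ using by exact_mod_cast (Nat.cast_nonneg N).trans hNm.le
  refine ⟨k, m, (le_max_right K N).trans hk, by exact_mod_cast hNm.le, ?_⟩
  rw [Int.cast_natCast] at hm
  rw [abs_lt]
  constructor <;> linarith

theorem eventually_residual_infinite_setOf_abs_mul_sub_mul_sub_lt {a b : ℝ} (ha : 0 < a)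
    (hb : 0 < b) (hab : Irrational (a / b)) (ε : ℕ × ℕ → ℝ) (hε : ∀ p, 0 < ε p) :
    ∀ᶠ c in residual ℝ,
      {p : ℕ × ℕ | 0 < p.1 ∧ 0 < p.2 ∧ |p.1 * a - p.2 * b - c| < ε p}.Infinite := by
  let U (N : ℕ) : Set ℝ :=
    ⋃ (p : ℕ × ℕ) (_ : N ≤ p.1 ∧ N ≤ p.2), Metric.ball (p.1 * a - p.2 * b) (ε p)
  have hU (N : ℕ) : U N ∈ residual ℝ := by
    refine residual_of_dense_open (isOpen_biUnion fun _ _ ↦ Metric.isOpen_ball) ?_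
    refine Metric.dense_iff.2 fun x r hr ↦ ?_
    obtain ⟨k, m, hk, hm, hkm⟩ := exists_nat_nat_abs_mul_sub_mul_sub_lt ha hb hab x hr N
    exact ⟨k * a - m * b, by rwa [Metric.mem_ball, Real.dist_eq],
      Set.mem_biUnion (x := (k, m)) ⟨hk, hm⟩ (Metric.mem_ball_self (hε _))⟩
  filter_upwards [countable_iInter_mem.2 hU] with c hc
  refine Set.infinite_of_not_bddAbove fun ⟨B, hB⟩ ↦ ?_
  obtain ⟨p, ⟨hp₁, hp₂⟩, hcp⟩ := Set.mem_iUnion₂.1 (Set.mem_iInter.1 hc (B.1 + B.2 + 1))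
  rw [Metric.mem_ball, Real.dist_eq, abs_sub_comm] at hcp
  have := (hB ⟨by omega, by omega, hcp⟩).1
  omega

theorem abs_exp_sub_exp_le {x y : ℝ} (h : |x - y| ≤ 1) :
    |exp x - exp y| ≤ 2 * exp y * |x - y| := by
  have hxy : exp x - exp y = exp y * (exp (x - y) - 1) := by
    rw [mul_sub, ← exp_add]; ring_nf
  rw [hxy, abs_mul, abs_of_pos (exp_pos y), mul_assoc, mul_left_comm]
  exact mul_le_mul_of_nonneg_left (abs_exp_sub_one_le h) (exp_pos y).le

theorem pow_sub_exp_mul_pow_eq {α β : ℝ} (hα : 0 < α) (hβ : 0 < β) (k m : ℕ) (c : ℝ) :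
    α ^ k - exp c * β ^ m = β ^ m * (exp (k * log α - m * log β) - exp c) := by
  rw [exp_sub, exp_nat_mul, exp_nat_mul, exp_log hα, exp_log hβ]
  field_simp

theorem power_approximation
    (α β : ℝ) (hα : 1 < α) (hβ : 1 < β)
    (hmi : ∀ m n : ℤ, α ^ m * β ^ n = 1 → m = 0 ∧ n = 0)
    (C : ℝ) (hC : 1 < C) :
    ∃ γ : ℝ, 1 < γ ∧
      {p : ℕ × ℕ | 0 < p.1 ∧ 0 < p.2 ∧
        |α ^ p.1 - γ * β ^ p.2| < (C ^ (p.1 + p.2))⁻¹}.Infinite := by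
  have hα₀ : 0 < α := by linarith
  have hβ₀ : 0 < β := by linarith
  have hC₀ : 0 < C := by linarith
  set ε : ℕ × ℕ → ℝ := fun p ↦ (6 * β ^ p.2 * C ^ (p.1 + p.2))⁻¹ with hε_def
  have hε₁ (p : ℕ × ℕ) : ε p ≤ 1 := inv_le_one_of_one_le₀ <| by
    nlinarith [one_le_pow₀ (n := p.2) hβ.le, one_le_pow₀ (n := p.1 + p.2) hC.le]
  have hres := eventually_residual_infinite_setOf_abs_mul_sub_mul_sub_lt (log_pos hα) (log_pos hβ)
    (irrational_log_div_log hα₀ hβ₀ hmi) ε (fun p ↦ by positivity)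
  obtain ⟨c, hc, hc₀, hc₁⟩ := (dense_of_mem_residual hres).exists_mem_open isOpen_Ioo
    (Set.nonempty_Ioo.2 zero_lt_one)
  refine ⟨exp c, one_lt_exp_iff.2 hc₀, hc.mono ?_⟩
  rintro p ⟨hk, hm, hp⟩
  refine ⟨hk, hm, ?_⟩
  have hexp : exp c < 3 := (exp_lt_exp.2 hc₁).trans exp_one_lt_three
  calc |α ^ p.1 - exp c * β ^ p.2|
      = β ^ p.2 * |exp (p.1 * log α - p.2 * log β) - exp c| := by
        rw [pow_sub_exp_mul_pow_eq hα₀ hβ₀, abs_mul, abs_of_pos (by positivity)]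
    _ ≤ β ^ p.2 * (2 * exp c * |p.1 * log α - p.2 * log β - c|) := by
        gcongr
        exact abs_exp_sub_exp_le (hp.le.trans (hε₁ p))
    _ < β ^ p.2 * (2 * 3 * ε p) := by gcongr
    _ = (C ^ (p.1 + p.2))⁻¹ := by
        rw [hε_def]
        field_simp
        norm_num
end

section
/- Let α, β be complex numbers with |α| > 1, |β| > 1, and suppose α^u = β^v for positive integers u, v (so β = ζ α^{u/v} for some v-th root of unity ζ, with α not a root of unity). Let γ, δ be nonzero complex numbers, 0 < ε < 1, and let (a_n), (b_n) satisfy |a_k - γ α^k| ≤ C |α|^{k(1-ε)} and |b_m - δ β^m| ≤ C |β|^{m(1-ε)} for all k, m. If a_k = b_m has infinitely many solutions in non-negative integers (k, m), then there exist integers u', v', w (with v' ≥ 1) such that all but finitely many solutions satisfy k = (u' m + w)/v'. -/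
set_option maxHeartbeats 1000000

open Filter
private lemma exp_transfer (Cst D x y x' y' : ℝ) (h : y' - x' = y - x)
    (h1 : Cst * Real.exp x ≤ D * Real.exp y) :
    Cst * Real.exp x' ≤ D * Real.exp y' := by
  have h2 := mul_le_mul_of_nonneg_right h1 (Real.exp_pos (x' - x)).le
  calc Cst * Real.exp x' = Cst * Real.exp x * Real.exp (x' - x) := by
        rw [mul_assoc, ← Real.exp_add]; congr 2; ring
    _ ≤ D * Real.exp y * Real.exp (x' - x) := h2
    _ = D * Real.exp y' := by rw [mul_assoc, ← Real.exp_add]; congr 2; linarith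

private lemma exp_log_le (c1 c2 x y : ℝ) (hc1 : 0 < c1)
    (h : c1 * Real.exp x ≤ c2 * Real.exp y) : x ≤ y + Real.log (c2 / c1) := by
  have hc2 : 0 < c2 := by nlinarith [Real.exp_pos x, Real.exp_pos y]
  have h3 : Real.exp x ≤ Real.exp (y + Real.log (c2 / c1)) := by
    rw [Real.exp_add, Real.exp_log (by positivity)]
    calc Real.exp x ≤ c2 * Real.exp y / c1 := by rw [le_div_iff₀ hc1]; linarith
      _ = Real.exp y * (c2 / c1) := by ring
  exact Real.exp_le_exp.1 h3

private lemma ev_ge (Cst D r : ℝ) (hD : 0 < D) (hr : 1 < r) :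
    ∃ N : ℕ, ∀ k ≥ N, Cst ≤ D * r ^ k := by
  have h := (tendsto_pow_atTop_atTop_of_one_lt hr).const_mul_atTop hD
  exact eventually_atTop.mp (h.eventually_ge_atTop Cst)

private lemma pow_close (t : ℂ) (ht : ‖t - 1‖ ≤ 1) (n : ℕ) :
    ‖t ^ n - 1‖ ≤ n * 2 ^ n * ‖t - 1‖ := by
  have hnt : ‖t‖ ≤ 2 := by
    calc ‖t‖ = ‖(t - 1) + 1‖ := by ring_nf
      _ ≤ ‖t - 1‖ + ‖(1:ℂ)‖ := norm_add_le _ _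
      _ = ‖t - 1‖ + 1 := by norm_num
      _ ≤ 2 := by linarith
  induction n with
  | zero => simp
  | succ n ih =>
    have key : t ^ (n + 1) - 1 = t ^ n * (t - 1) + (t ^ n - 1) := by ring
    have h1 : ‖t ^ (n+1) - 1‖ ≤ ‖t‖ ^ n * ‖t - 1‖ + ‖t ^ n - 1‖ := by
      rw [key]
      exact le_trans (norm_add_le _ _) (by rw [norm_mul, norm_pow])
    have h2 : ‖t‖ ^ n ≤ 2 ^ n := pow_le_pow_left₀ (norm_nonneg t) hnt n
    have h3 : (0:ℝ) ≤ ‖t - 1‖ := norm_nonneg _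
    have h4 : (0:ℝ) < 2 ^ n := by positivity
    have h5 : ‖t‖ ^ n * ‖t - 1‖ ≤ 2 ^ n * ‖t - 1‖ := mul_le_mul_of_nonneg_right h2 h3
    have h7 : (0:ℝ) ≤ (n:ℝ) * 2 ^ n * ‖t - 1‖ :=
      mul_nonneg (mul_nonneg (Nat.cast_nonneg n) h4.le) h3
    have h8 : (0:ℝ) ≤ (2:ℝ) ^ n * ‖t - 1‖ := mul_nonneg h4.le h3
    calc ‖t ^ (n+1) - 1‖ ≤ 2 ^ n * ‖t - 1‖ + (n:ℝ) * 2 ^ n * ‖t - 1‖ := by linarith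
      _ ≤ ((n:ℕ) + 1 : ℕ) * 2 ^ (n+1) * ‖t - 1‖ := by
          push_cast
          rw [pow_succ (2:ℝ)]
          nlinarith

private lemma aux_tendsto (α : ℂ) (hα : 1 < ‖α‖) (γ : ℂ) (hγ : γ ≠ 0)
    (ε C : ℝ) (hε0 : 0 < ε) (hε1 : ε < 1) (hC : 0 < C) (a : ℕ → ℂ)
    (ha : ∀ k : ℕ, ‖a k - γ * α ^ k‖ ≤ C * ‖α‖ ^ ((k : ℝ) * (1 - ε))) :
    Tendsto (fun k => ‖a k‖) atTop atTop := by
  set X := ‖α‖ with hXdef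
  have hX0 : (0:ℝ) < X := by linarith
  set L := Real.log X with hLdef
  have hL : 0 < L := Real.log_pos hα
  have hXr : ∀ t : ℝ, X ^ t = Real.exp (t * L) := fun t => by
    rw [Real.rpow_def_of_pos hX0, mul_comm]
  have hXk : ∀ k : ℕ, X ^ k = Real.exp ((k:ℝ) * L) := fun k => by
    rw [← Real.rpow_natCast X k, hXr]
  have hg : 0 < ‖γ‖ := norm_pos_iff.2 hγ
  obtain ⟨N, hN⟩ := ev_ge C (‖γ‖/2) (Real.exp (ε * L)) (by positivity)
    (by nlinarith [Real.add_one_le_exp (ε * L)])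
  have hbig : ∀ k ≥ N, (‖γ‖/2) * X ^ k ≤ ‖a k‖ := by
    intro k hk
    have h1 : C * X ^ ((k:ℝ) * (1 - ε)) ≤ (‖γ‖/2) * X ^ k := by
      rw [hXr, hXk]
      refine exp_transfer C (‖γ‖/2) 0 ((k:ℝ) * (ε * L)) ((k:ℝ)*(1-ε)*L) ((k:ℝ)*L)
        (by ring) ?_
      rw [Real.exp_zero, mul_one]
      calc C ≤ (‖γ‖/2) * (Real.exp (ε*L)) ^ k := hN k hk
        _ = (‖γ‖/2) * Real.exp ((k:ℝ) * (ε * L)) := by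
            rw [← Real.exp_nat_mul]
    have h2 : ‖γ * α ^ k‖ - ‖a k - γ * α ^ k‖ ≤ ‖a k‖ := by
      have := norm_sub_norm_le (γ * α ^ k) (γ * α ^ k - a k)
      simp only [sub_sub_cancel] at this
      calc ‖γ * α ^ k‖ - ‖a k - γ * α ^ k‖
          = ‖γ * α ^ k‖ - ‖γ * α ^ k - a k‖ := by rw [norm_sub_rev]
        _ ≤ ‖a k‖ := this
    have h3 : ‖γ * α ^ k‖ = ‖γ‖ * X ^ k := by rw [norm_mul, norm_pow]
    have h4 := ha k
    nlinarith [pow_pos hX0 k]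
  have hlim : Tendsto (fun k => (‖γ‖/2) * X ^ k) atTop atTop :=
    (tendsto_pow_atTop_atTop_of_one_lt hα).const_mul_atTop (by positivity)
  exact tendsto_atTop_mono' atTop (eventually_atTop.2 ⟨N, hbig⟩) hlim

theorem common_terms_mult_dependent_case
    (α β : ℂ) (hα : 1 < ‖α‖) (hβ : 1 < ‖β‖)
    (u v : ℕ) (hu : 0 < u) (hv : 0 < v) (hdep : α ^ u = β ^ v)
    (hnru : ∀ m : ℕ, 0 < m → α ^ m ≠ 1)
    (γ δ : ℂ) (hγ : γ ≠ 0) (hδ : δ ≠ 0)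
    (ε : ℝ) (hε0 : 0 < ε) (hε1 : ε < 1)
    (C : ℝ) (hC : 0 < C)
    (a b : ℕ → ℂ)
    (ha : ∀ k : ℕ, ‖a k - γ * α ^ k‖ ≤ C * ‖α‖ ^ ((k : ℝ) * (1 - ε)))
    (hb : ∀ m : ℕ, ‖b m - δ * β ^ m‖ ≤ C * ‖β‖ ^ ((m : ℝ) * (1 - ε)))
    (hinf : {p : ℕ × ℕ | a p.1 = b p.2}.Infinite) :
    ∃ u' w v' : ℤ, 1 ≤ v' ∧
      {p : ℕ × ℕ | a p.1 = b p.2 ∧ v' * (p.1 : ℤ) ≠ u' * (p.2 : ℤ) + w}.Finite := by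
  classical
  have h1exp : ∀ x : ℝ, 0 < x → 1 < Real.exp x := fun x hx => by
    nlinarith [Real.add_one_le_exp x]
  set X := ‖α‖ with hXdef
  set Y := ‖β‖ with hYdef
  have hX0 : (0:ℝ) < X := lt_trans one_pos hα
  have hY0 : (0:ℝ) < Y := lt_trans one_pos hβ
  have hα0 : α ≠ 0 := norm_pos_iff.mp (lt_trans one_pos hα)
  have hβ0 : β ≠ 0 := norm_pos_iff.mp (lt_trans one_pos hβ)
  set L := Real.log X with hLdef
  set M := Real.log Y with hMdef
  have hL : 0 < L := Real.log_pos hα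
  have hM : 0 < M := Real.log_pos hβ
  have hvR : (0:ℝ) < (v:ℝ) := by exact_mod_cast hv
  have huv : (u:ℝ) * L = (v:ℝ) * M := by
    have h : X ^ u = Y ^ v := by rw [hXdef, hYdef, ← norm_pow, ← norm_pow, hdep]
    have h2 := congrArg Real.log h
    rwa [Real.log_pow, Real.log_pow] at h2
  have hXr : ∀ t : ℝ, X ^ t = Real.exp (t * L) := fun t => by
    rw [Real.rpow_def_of_pos hX0, mul_comm]
  have hXk : ∀ k : ℕ, X ^ k = Real.exp ((k:ℝ) * L) := fun k => by
    rw [← Real.rpow_natCast X k, hXr]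
  have hYr : ∀ t : ℝ, Y ^ t = Real.exp (t * M) := fun t => by
    rw [Real.rpow_def_of_pos hY0, mul_comm]
  have hYk : ∀ m : ℕ, Y ^ m = Real.exp ((m:ℝ) * M) := fun m => by
    rw [← Real.rpow_natCast Y m, hYr]
  have hg : 0 < ‖γ‖ := norm_pos_iff.2 hγ
  have hdn : 0 < ‖δ‖ := norm_pos_iff.2 hδ
  -- finiteness of fibers
  have hta := aux_tendsto α hα γ hγ ε C hε0 hε1 hC a ha
  have htb := aux_tendsto β hβ δ hδ ε C hε0 hε1 hC b hb
  have hfib_a : ∀ z : ℂ, {k : ℕ | a k = z}.Finite := by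
    intro z
    have hev : ∀ᶠ k in atTop, ‖z‖ < ‖a k‖ := hta.eventually_gt_atTop ‖z‖
    rw [← Nat.cofinite_eq_atTop, Filter.eventually_cofinite] at hev
    apply hev.subset
    intro k hk
    simp only [Set.mem_setOf_eq] at hk ⊢
    simp [hk]
  have hfib_b : ∀ z : ℂ, {m : ℕ | b m = z}.Finite := by
    intro z
    have hev : ∀ᶠ m in atTop, ‖z‖ < ‖b m‖ := htb.eventually_gt_atTop ‖z‖
    rw [← Nat.cofinite_eq_atTop, Filter.eventually_cofinite] at hev
    apply hev.subset
    intro m hm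
    simp only [Set.mem_setOf_eq] at hm ⊢
    simp [hm]
  have hF1 : ∀ K : ℕ, {p : ℕ × ℕ | a p.1 = b p.2 ∧ (p.1 ≤ K ∨ p.2 ≤ K)}.Finite := by
    intro K
    have h1 : (⋃ k ∈ Set.Iic K, ({k} : Set ℕ) ×ˢ {m : ℕ | b m = a k}).Finite :=
      Set.Finite.biUnion (Set.finite_Iic K)
        (fun k _ => (Set.finite_singleton k).prod (hfib_b (a k)))
    have h2 : (⋃ m ∈ Set.Iic K, {n : ℕ | a n = b m} ×ˢ ({m} : Set ℕ)).Finite :=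
      Set.Finite.biUnion (Set.finite_Iic K)
        (fun m _ => (hfib_a (b m)).prod (Set.finite_singleton m))
    apply (h1.union h2).subset
    rintro ⟨k, m⟩ ⟨hab, hK | hK⟩
    · exact Set.mem_union_left _ (Set.mem_biUnion hK ⟨rfl, hab.symm⟩)
    · exact Set.mem_union_right _ (Set.mem_biUnion hK ⟨hab, rfl⟩)
  -- difference bound on solutions
  have hdiff : ∀ k m : ℕ, a k = b m →
      ‖γ * α ^ k - δ * β ^ m‖ ≤ C * X ^ ((k:ℝ) * (1 - ε)) + C * Y ^ ((m:ℝ) * (1 - ε)) := by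
    intro k m hab
    calc ‖γ * α ^ k - δ * β ^ m‖ = ‖(b m - δ * β ^ m) - (a k - γ * α ^ k)‖ := by
          rw [hab]; congr 1; ring
      _ ≤ ‖b m - δ * β ^ m‖ + ‖a k - γ * α ^ k‖ := norm_sub_le _ _
      _ ≤ C * Y ^ ((m:ℝ) * (1 - ε)) + C * X ^ ((k:ℝ) * (1 - ε)) := add_le_add (hb m) (ha k)
      _ = C * X ^ ((k:ℝ) * (1 - ε)) + C * Y ^ ((m:ℝ) * (1 - ε)) := by ring
  obtain ⟨N1, hN1⟩ := ev_ge C (‖γ‖ / 2) (Real.exp (ε * L)) (by positivity)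
    (h1exp _ (by positivity))
  obtain ⟨N2, hN2⟩ := ev_ge C (‖δ‖ / 2) (Real.exp (ε * M)) (by positivity)
    (h1exp _ (by positivity))
  set N := max N1 N2 with hNdef
  have hsmallX : ∀ k : ℕ, N1 ≤ k → C * X ^ ((k:ℝ) * (1 - ε)) ≤ (‖γ‖ / 2) * X ^ k := by
    intro k hk
    rw [hXr, hXk]
    refine exp_transfer C (‖γ‖ / 2) 0 ((k:ℝ) * (ε * L)) ((k:ℝ) * (1 - ε) * L) ((k:ℝ) * L)
      (by ring) ?_
    rw [Real.exp_zero, mul_one]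
    calc C ≤ (‖γ‖ / 2) * (Real.exp (ε * L)) ^ k := hN1 k hk
      _ = (‖γ‖ / 2) * Real.exp ((k:ℝ) * (ε * L)) := by rw [← Real.exp_nat_mul]
  have hsmallY : ∀ m : ℕ, N2 ≤ m → C * Y ^ ((m:ℝ) * (1 - ε)) ≤ (‖δ‖ / 2) * Y ^ m := by
    intro m hm
    rw [hYr, hYk]
    refine exp_transfer C (‖δ‖ / 2) 0 ((m:ℝ) * (ε * M)) ((m:ℝ) * (1 - ε) * M) ((m:ℝ) * M)
      (by ring) ?_
    rw [Real.exp_zero, mul_one]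
    calc C ≤ (‖δ‖ / 2) * (Real.exp (ε * M)) ^ m := hN2 m hm
      _ = (‖δ‖ / 2) * Real.exp ((m:ℝ) * (ε * M)) := by rw [← Real.exp_nat_mul]
  set D1 := Real.log ((3 / 2 * ‖δ‖) / (‖γ‖ / 2)) with hD1def
  set D2 := Real.log ((3 / 2 * ‖γ‖) / (‖δ‖ / 2)) with hD2def
  set B := (v:ℝ) * max D1 D2 / L with hBdef
  have hB : ∀ k m : ℕ, a k = b m → N ≤ k → N ≤ m →
      |(v:ℝ) * k - (u:ℝ) * m| ≤ B := by
    intro k m hab hk hm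
    have h1 := hsmallX k (le_trans (le_max_left _ _) hk)
    have h2 := hsmallY m (le_trans (le_max_right _ _) hm)
    have h3 := hdiff k m hab
    have h4 : |‖γ‖ * X ^ k - ‖δ‖ * Y ^ m| ≤ ‖γ * α ^ k - δ * β ^ m‖ := by
      have h5 := abs_norm_sub_norm_le (γ * α ^ k) (δ * β ^ m)
      rwa [norm_mul, norm_mul, norm_pow, norm_pow] at h5
    have habs := abs_le.1 (le_trans h4 (le_trans h3 (add_le_add h1 h2)))
    have hax : (‖γ‖ / 2) * X ^ k ≤ (3 / 2 * ‖δ‖) * Y ^ m := by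
      have := habs.2; linarith
    have hay : (‖δ‖ / 2) * Y ^ m ≤ (3 / 2 * ‖γ‖) * X ^ k := by
      have := habs.1; linarith
    have hx' : (k:ℝ) * L ≤ (m:ℝ) * M + D1 := by
      refine exp_log_le _ _ _ _ (by positivity) ?_
      rw [← hXk, ← hYk]; exact hax
    have hy' : (m:ℝ) * M ≤ (k:ℝ) * L + D2 := by
      refine exp_log_le _ _ _ _ (by positivity) ?_
      rw [← hYk, ← hXk]; exact hay
    have hDD : |(k:ℝ) * L - (m:ℝ) * M| ≤ max D1 D2 := by
      rw [abs_le]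
      constructor
      · linarith [le_max_right D1 D2]
      · linarith [le_max_left D1 D2]
    have hswap : |(v:ℝ) * k - (u:ℝ) * m| * L = (v:ℝ) * |(k:ℝ) * L - (m:ℝ) * M| := by
      have h9 : ((v:ℝ) * k - (u:ℝ) * m) * L = (v:ℝ) * ((k:ℝ) * L - (m:ℝ) * M) := by
        linear_combination (-(m:ℝ)) * huv
      calc |(v:ℝ) * k - (u:ℝ) * m| * L = |((v:ℝ) * k - (u:ℝ) * m) * L| := by
            rw [abs_mul, abs_of_pos hL]
        _ = |(v:ℝ) * ((k:ℝ) * L - (m:ℝ) * M)| := by rw [h9]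
        _ = (v:ℝ) * |(k:ℝ) * L - (m:ℝ) * M| := by
            rw [abs_mul, abs_of_nonneg (Nat.cast_nonneg v : (0:ℝ) ≤ (v:ℝ))]
    rw [hBdef, le_div_iff₀ hL]
    calc |(v:ℝ) * k - (u:ℝ) * m| * L = (v:ℝ) * |(k:ℝ) * L - (m:ℝ) * M| := hswap
      _ ≤ (v:ℝ) * max D1 D2 := mul_le_mul_of_nonneg_left hDD (Nat.cast_nonneg v)
  set W0 : ℤ := ⌈B⌉ with hW0def
  set T : ℤ → Set (ℕ × ℕ) :=
    fun w => {p : ℕ × ℕ | a p.1 = b p.2 ∧ (v:ℤ) * p.1 = (u:ℤ) * p.2 + w} with hTdef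
  have hIcc : ∀ k m : ℕ, a k = b m → N ≤ k → N ≤ m →
      (v:ℤ) * k - (u:ℤ) * m ∈ Finset.Icc (-W0) W0 := by
    intro k m hab hk hm
    have h1 := hB k m hab hk hm
    have h2 : B ≤ (W0 : ℝ) := Int.le_ceil B
    have h3 : |(((v:ℤ) * k - (u:ℤ) * m : ℤ) : ℝ)| ≤ (W0 : ℝ) := by
      push_cast
      calc |(v:ℝ) * k - (u:ℝ) * m| ≤ B := h1
        _ ≤ (W0 : ℝ) := h2
    rw [Finset.mem_Icc]
    have h4 := abs_le.1 h3
    exact ⟨by exact_mod_cast h4.1, by exact_mod_cast h4.2⟩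
  -- key lemma
  have key : ∀ w : ℤ, (T w).Infinite → γ ^ v * α ^ w = δ ^ v := by
    intro w hw
    have hcval : ∀ p : ℕ × ℕ, p ∈ T w →
        (γ * α ^ p.1 / (δ * β ^ p.2)) ^ v = γ ^ v * α ^ w / δ ^ v := by
      rintro ⟨k, m⟩ ⟨hab, hp⟩
      have e0 : α ^ ((v:ℤ) * k) = α ^ ((u:ℤ) * m + w) := by rw [hp]
      have l1 : α ^ ((v:ℤ) * (k:ℤ)) = (α ^ k) ^ v := by
        rw [show (v:ℤ) * (k:ℤ) = ((v * k : ℕ) : ℤ) by push_cast; ring, zpow_natCast,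
          pow_mul']
      have l2 : α ^ ((u:ℤ) * (m:ℤ) + w) = (β ^ m) ^ v * α ^ w := by
        rw [zpow_add₀ hα0, show (u:ℤ) * (m:ℤ) = ((u * m : ℕ) : ℤ) by push_cast; ring,
          zpow_natCast, pow_mul, hdep, ← pow_mul, pow_mul']
      have e1 : (α ^ k) ^ v = (β ^ m) ^ v * α ^ w := by rw [← l1, e0, l2]
      have hβm : (β : ℂ) ^ m ≠ 0 := pow_ne_zero _ hβ0
      rw [div_pow, mul_pow, mul_pow, e1,
        show γ ^ v * ((β ^ m) ^ v * α ^ w) = γ ^ v * α ^ w * (β ^ m) ^ v by ring,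
        mul_div_mul_right _ _ (pow_ne_zero v hβm)]
    suffices hle : ‖γ ^ v * α ^ w / δ ^ v - 1‖ ≤ 0 by
      have h0 : γ ^ v * α ^ w / δ ^ v - 1 = 0 := norm_le_zero_iff.1 hle
      have h1 : γ ^ v * α ^ w / δ ^ v = 1 := by linear_combination h0
      exact (div_eq_one_iff_eq (pow_ne_zero v hδ)).1 h1
    apply le_of_forall_pos_le_add
    intro η hη
    set Q : ℝ := (v:ℝ) * 2 ^ v + 1 with hQdef
    have hQ0 : 0 < Q := by positivity
    set η' := min 1 (η / Q) with hη'def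
    have hη'0 : 0 < η' := lt_min one_pos (by positivity)
    obtain ⟨N3, hN3⟩ := ev_ge (C * Real.exp ((w:ℝ) * L / v)) (η' * ‖δ‖ / 2)
      (Real.exp (ε * L)) (by positivity) (h1exp _ (by positivity))
    obtain ⟨N4, hN4⟩ := ev_ge C (η' * ‖δ‖ / 2) (Real.exp (ε * M)) (by positivity)
      (h1exp _ (by positivity))
    obtain ⟨⟨k, m⟩, hmem, hnot⟩ := (hw.diff (hF1 (max N3 N4))).nonempty
    obtain ⟨hab, hkm⟩ := hmem
    simp only [Set.mem_setOf_eq, not_and, not_or, not_le] at hnot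
    obtain ⟨hkN, hmN⟩ := hnot hab
    have hk3 : N3 ≤ k := le_of_lt (lt_of_le_of_lt (le_max_left _ _) hkN)
    have hm4 : N4 ≤ m := le_of_lt (lt_of_le_of_lt (le_max_right _ _) hmN)
    have hkm' : (v:ℝ) * k = (u:ℝ) * m + (w:ℝ) := by exact_mod_cast hkm
    have hMm : (m:ℝ) * M = (k:ℝ) * L - (w:ℝ) * L / (v:ℝ) := by
      apply mul_left_cancel₀ (ne_of_gt hvR)
      have e : (v:ℝ) * ((m:ℝ) * M) = ((v:ℝ) * k - (w:ℝ)) * L := by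
        calc (v:ℝ) * ((m:ℝ) * M) = (m:ℝ) * ((v:ℝ) * M) := by ring
          _ = (m:ℝ) * ((u:ℝ) * L) := by rw [← huv]
          _ = ((u:ℝ) * m) * L := by ring
          _ = ((v:ℝ) * k - (w:ℝ)) * L := by rw [show (u:ℝ) * m = (v:ℝ) * k - w by linarith]
      rw [e]
      field_simp
    have hb1 : C * X ^ ((k:ℝ) * (1 - ε)) ≤ (η' * ‖δ‖ / 2) * Y ^ m := by
      rw [hXr, hYk]
      refine exp_transfer _ _ ((w:ℝ) * L / v) ((k:ℝ) * (ε * L)) _ _ (by rw [hMm]; ring) ?_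
      calc C * Real.exp ((w:ℝ) * L / v) ≤ (η' * ‖δ‖ / 2) * (Real.exp (ε * L)) ^ k :=
            hN3 k hk3
        _ = (η' * ‖δ‖ / 2) * Real.exp ((k:ℝ) * (ε * L)) := by rw [← Real.exp_nat_mul]
    have hb2 : C * Y ^ ((m:ℝ) * (1 - ε)) ≤ (η' * ‖δ‖ / 2) * Y ^ m := by
      rw [hYr, hYk]
      refine exp_transfer C (η' * ‖δ‖ / 2) 0 ((m:ℝ) * (ε * M)) ((m:ℝ) * (1 - ε) * M)
        ((m:ℝ) * M) (by ring) ?_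
      rw [Real.exp_zero, mul_one]
      calc C ≤ (η' * ‖δ‖ / 2) * (Real.exp (ε * M)) ^ m := hN4 m hm4
        _ = (η' * ‖δ‖ / 2) * Real.exp ((m:ℝ) * (ε * M)) := by rw [← Real.exp_nat_mul]
    have hsum : ‖γ * α ^ k - δ * β ^ m‖ ≤ η' * (‖δ‖ * Y ^ m) := by
      have := hdiff k m hab
      nlinarith [pow_pos hY0 m]
    have ht : ‖γ * α ^ k / (δ * β ^ m) - 1‖ ≤ η' := by
      have hden0c : δ * β ^ m ≠ 0 := mul_ne_zero hδ (pow_ne_zero _ hβ0)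
      have heq : γ * α ^ k / (δ * β ^ m) - 1 = (γ * α ^ k - δ * β ^ m) / (δ * β ^ m) := by
        field_simp
      have hden : ‖δ * β ^ m‖ = ‖δ‖ * Y ^ m := by rw [norm_mul, norm_pow]
      have hdpos : (0:ℝ) < ‖δ‖ * Y ^ m := by positivity
      rw [heq, norm_div, hden, div_le_iff₀ hdpos]
      linarith
    have hclose := pow_close _ (le_trans ht (min_le_left _ _)) v
    rw [hcval (k, m) ⟨hab, hkm⟩] at hclose
    have hQ1 : (v:ℝ) * 2 ^ v * η' ≤ η := by
      have h5 : η' ≤ η / Q := min_le_right _ _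
      have h6 : (v:ℝ) * 2 ^ v * (η / Q) ≤ Q * (η / Q) := by
        apply mul_le_mul_of_nonneg_right _ (by positivity)
        rw [hQdef]; linarith
      have h7 : Q * (η / Q) = η := by field_simp
      nlinarith [mul_le_mul_of_nonneg_left h5 (show (0:ℝ) ≤ (v:ℝ) * 2 ^ v by positivity)]
    calc ‖γ ^ v * α ^ w / δ ^ v - 1‖ ≤ (v:ℝ) * 2 ^ v * ‖γ * α ^ k / (δ * β ^ m) - 1‖ :=
          hclose
      _ ≤ (v:ℝ) * 2 ^ v * η' :=
          mul_le_mul_of_nonneg_left ht (by positivity)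
      _ ≤ 0 + η := by linarith
  have hzero : ∀ d : ℤ, α ^ d = 1 → d = 0 := by
    intro d hd1
    by_contra hne
    rcases lt_or_gt_of_ne hne with h | h
    · apply hnru (-d).toNat (by omega)
      rw [← zpow_natCast, Int.toNat_of_nonneg (by omega), zpow_neg, hd1, inv_one]
    · apply hnru d.toNat (by omega)
      rw [← zpow_natCast, Int.toNat_of_nonneg (by omega)]
      exact hd1
  -- pigeonhole: some w occurs infinitely often
  obtain ⟨w, hw⟩ : ∃ w : ℤ, (T w).Infinite := by
    by_contra hno
    push_neg at hno
    apply hinf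
    apply Set.Finite.subset ((hF1 N).union
      (Set.Finite.biUnion (Finset.Icc (-W0) W0).finite_toSet (fun w' _ => hno w')))
    rintro ⟨k, m⟩ hab
    simp only [Set.mem_setOf_eq] at hab
    by_cases hsm : k ≤ N ∨ m ≤ N
    · exact Set.mem_union_left _ ⟨hab, hsm⟩
    · push_neg at hsm
      exact Set.mem_union_right _
        (Set.mem_biUnion (Finset.mem_coe.mpr (hIcc k m hab hsm.1.le hsm.2.le))
          ⟨hab, by ring⟩)
  refine ⟨(u:ℤ), w, (v:ℤ), by exact_mod_cast hv, ?_⟩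
  have hTfin : ∀ w' : ℤ, w' ≠ w → (T w').Finite := by
    intro w' hne
    rcases Set.finite_or_infinite (T w') with h | h
    · exact h
    · exfalso
      have e1 := key w' h
      have e2 := key w hw
      have e3 : α ^ w' = α ^ w := mul_left_cancel₀ (pow_ne_zero v hγ) (e1.trans e2.symm)
      have e4 : α ^ (w' - w) = 1 := by
        rw [zpow_sub₀ hα0, e3, div_self (zpow_ne_zero w hα0)]
      exact hne (by have := hzero _ e4; omega)
  apply Set.Finite.subset ((hF1 N).union
    (Set.Finite.biUnion ((Finset.Icc (-W0) W0).erase w).finite_toSet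
      (fun w' hw' => hTfin w' (Finset.ne_of_mem_erase hw'))))
  rintro ⟨k, m⟩ ⟨hab, hne⟩
  by_cases hsm : k ≤ N ∨ m ≤ N
  · exact Set.mem_union_left _ ⟨hab, hsm⟩
  · push_neg at hsm
    have hmem : ((v:ℤ) * k - (u:ℤ) * m) ∈ (Finset.Icc (-W0) W0).erase w := by
      refine Finset.mem_erase.2 ⟨?_, hIcc k m hab hsm.1.le hsm.2.le⟩
      intro hcon
      exact hne (by linarith)
    exact Set.mem_union_right _
      (Set.mem_biUnion (Finset.mem_coe.mpr hmem) ⟨hab, by linarith⟩)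
end

section
/- Let α be a complex number with |α| > 1 that is not a root of unity, let γ ≠ 0, 0 < ε < 1 and C > 0, and let (a_n) be a sequence with |a_k - γ α^k| ≤ C |α|^{k(1-ε)} for all k. Then the equation a_k = a_m has only finitely many solutions in non-negative integers (k, m) with k ≠ m. -/
theorem equal_terms_finite
    (α : ℂ) (hα : 1 < ‖α‖) (hnru : ∀ m : ℕ, 0 < m → α ^ m ≠ 1)
    (γ : ℂ) (hγ : γ ≠ 0)
    (ε : ℝ) (hε0 : 0 < ε) (hε1 : ε < 1)
    (C : ℝ) (hC : 0 < C)
    (a : ℕ → ℂ)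
    (ha : ∀ k : ℕ, ‖a k - γ * α ^ k‖ ≤ C * ‖α‖ ^ ((k : ℝ) * (1 - ε))) :
    {p : ℕ × ℕ | p.1 ≠ p.2 ∧ a p.1 = a p.2}.Finite := by
  set r : ℝ := ‖α‖ with hr
  have hr0 : (0:ℝ) < r := lt_trans one_pos hα
  have hγ' : (0:ℝ) < ‖γ‖ := norm_pos_iff.mpr hγ
  set c : ℝ := ‖γ‖ * (r - 1) with hc
  have hc0 : (0:ℝ) < c := by
    have : (0:ℝ) < r - 1 := by linarith
    positivity
  have hb : 1 < r ^ ε := by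
    rw [Real.one_lt_rpow_iff_of_pos hr0]
    exact Or.inl ⟨hα, hε0⟩
  have htend : Filter.Tendsto (fun k : ℕ => (r ^ ε) ^ k) Filter.atTop Filter.atTop :=
    tendsto_pow_atTop_atTop_of_one_lt hb
  obtain ⟨N, hN⟩ := Filter.eventually_atTop.mp (htend.eventually_gt_atTop (2 * C * r / c))
  -- key claim
  have key : ∀ k m : ℕ, m < k → N ≤ k → a k ≠ a m := by
    intro k m hmk hNk heq
    obtain ⟨d, rfl⟩ : ∃ d, k = d + 1 := ⟨k - 1, by omega⟩
    have hmd : m ≤ d := Nat.lt_succ_iff.mp hmk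
    -- lower bound on main term
    have h1 : c * r ^ d ≤ ‖γ * α ^ (d + 1) - γ * α ^ m‖ := by
      have hpow : r ^ m ≤ r ^ d := pow_le_pow_right₀ hα.le hmd
      calc c * r ^ d = ‖γ‖ * (r ^ (d + 1) - r ^ d) := by rw [hc, pow_succ]; ring
        _ ≤ ‖γ‖ * (r ^ (d + 1) - r ^ m) := by
            apply mul_le_mul_of_nonneg_left _ hγ'.le
            linarith
        _ = ‖γ‖ * (‖α ^ (d + 1)‖ - ‖α ^ m‖) := by rw [norm_pow, norm_pow]
        _ ≤ ‖γ‖ * ‖α ^ (d + 1) - α ^ m‖ := by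
            apply mul_le_mul_of_nonneg_left _ hγ'.le
            exact norm_sub_norm_le _ _
        _ = ‖γ * α ^ (d + 1) - γ * α ^ m‖ := by rw [← mul_sub, norm_mul]
    -- error bounds
    set k := d + 1
    have h2 : ‖a m - γ * α ^ m‖ ≤ C * r ^ ((k : ℝ) * (1 - ε)) := by
      refine (ha m).trans ?_
      apply mul_le_mul_of_nonneg_left _ hC.le
      apply Real.rpow_le_rpow_of_exponent_le hα.le
      have : (m : ℝ) ≤ (k : ℝ) := Nat.cast_le.mpr hmk.le
      nlinarith
    have h3 : ‖a k - γ * α ^ k‖ ≤ C * r ^ ((k : ℝ) * (1 - ε)) := ha k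
    have h4 : ‖γ * α ^ k - γ * α ^ m‖ ≤ 2 * C * r ^ ((k : ℝ) * (1 - ε)) := by
      have : γ * α ^ k - γ * α ^ m = (a m - γ * α ^ m) - (a k - γ * α ^ k) := by
        rw [heq]; ring
      rw [this]
      calc ‖(a m - γ * α ^ m) - (a k - γ * α ^ k)‖
          ≤ ‖a m - γ * α ^ m‖ + ‖a k - γ * α ^ k‖ := norm_sub_le _ _
        _ ≤ 2 * C * r ^ ((k : ℝ) * (1 - ε)) := by linarith
    -- combine: c * r ^ d ≤ 2C * r^{k(1-ε)}
    have h5 : c * r ^ d ≤ 2 * C * r ^ ((k : ℝ) * (1 - ε)) := h1.trans h4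
    -- but from hN : (r^ε)^k > 2Cr/c, derive contradiction
    have hNk' := hN k hNk
    have hsplit : (r : ℝ) ^ k = r ^ ((k : ℝ) * ε) * r ^ ((k : ℝ) * (1 - ε)) := by
      rw [← Real.rpow_natCast r k, ← Real.rpow_add hr0]
      ring_nf
    have hre : ((r ^ ε) : ℝ) ^ k = r ^ ((k : ℝ) * ε) := by
      rw [← Real.rpow_natCast (r ^ ε) k, ← Real.rpow_mul hr0.le]
      ring_nf
    have hrk : (r : ℝ) ^ k = r * r ^ d := by rw [pow_succ]; ring
    have hpos : (0:ℝ) < r ^ ((k : ℝ) * (1 - ε)) := Real.rpow_pos_of_pos hr0 _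
    -- c * r^k = c * r^(kε) * r^(k(1-ε)) and c*(r^ε)^k > 2Cr
    have h6 : 2 * C * r / c < r ^ ((k : ℝ) * ε) := by rwa [hre] at hNk'
    have h7 : 2 * C * r < c * r ^ ((k : ℝ) * ε) := by
      rw [div_lt_iff₀ hc0] at h6; linarith [h6]
    -- multiply h5 by r: c * r^k ≤ 2C r * r^{k(1-ε)} < c * r^{kε} * r^{k(1-ε)} = c * r^k
    have h8 : c * r ^ k ≤ 2 * C * r * r ^ ((k : ℝ) * (1 - ε)) := by
      rw [hrk]
      nlinarith
    rw [hsplit] at h8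
    nlinarith
  -- finiteness
  apply Set.Finite.subset ((Set.finite_Iio N).prod (Set.finite_Iio N))
  rintro ⟨k, m⟩ ⟨hne, heq⟩
  rcases lt_or_gt_of_ne hne with h | h
  · have hm : m < N := by
      by_contra hm
      exact key m k h (le_of_not_gt hm) heq.symm
    exact ⟨lt_trans h hm, hm⟩
  · have hk : k < N := by
      by_contra hk
      exact key k m h (le_of_not_gt hk) heq
    exact ⟨hk, lt_trans h hk⟩
end
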